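/- arXiv:0801.0008 — 5 statements merged into one kernel-verified Lean document; each statement's English description precedes it below -/
import Mathlib

section
/- For all p, q ∈ {0,1,2,3} and all r, u ∈ {1,2}, r̄, ū ∈ {1,2}: 2 (σ_p)_{r,ū} (σ_q)_{u,r̄} = (σ_p)_{r,r̄} (σ_q)_{u,ū} + (σ_q)_{r,r̄} (σ_p)_{u,ū} − 2 e_{r,u} e_{r̄,ū} η_{pq} + i · Σ_{a=0}^{3} Σ_{b=0}^{3} Σ_{m=0}^{3} Σ_{n=0}^{3} η_{pa} η_{qb} ω^{ambn} (σ_m)_{u,ū} (σ_n)_{r,r̄}. -/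
open Finset

/-- The Infeld–van der Waerden (Pauli) matrices `σ_p` in a canonically
associated pair of frames. -/
noncomputable def sigma4 : Fin 4 → Matrix (Fin 2) (Fin 2) ℂ :=
  ![!![1, 0; 0, 1], !![0, 1; 1, 0], !![0, -Complex.I; Complex.I, 0], !![1, 0; 0, -1]]

/-- The inverse Infeld–van der Waerden matrices `τ_q`. -/
noncomputable def tau4 : Fin 4 → Matrix (Fin 2) (Fin 2) ℂ :=
  ![!![1, 0; 0, 1], !![0, 1; 1, 0], !![0, Complex.I; -Complex.I, 0], !![1, 0; 0, -1]]

/-- The Minkowski metric `η = diag (1, -1, -1, -1)`. -/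
noncomputable def eta : Fin 4 → Fin 4 → ℂ :=
  fun p q => if p = q then (if p = 0 then 1 else -1) else 0

/-- The spinor metric `d`. -/
noncomputable def dsp : Matrix (Fin 2) (Fin 2) ℂ := !![0, 1; -1, 0]

/-- The inverse spinor metric `e`. -/
noncomputable def esp : Matrix (Fin 2) (Fin 2) ℂ := !![0, -1; 1, 0]

/-- The totally antisymmetric Levi-Civita symbol in four indices with
`ε 0 1 2 3 = 1`, expressed through the Vandermonde product. -/
noncomputable def eps4 (a m b n : Fin 4) : ℂ :=
  ((((m.1 : ℤ) - a.1) * ((b.1 : ℤ) - a.1) * ((n.1 : ℤ) - a.1) *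
    ((b.1 : ℤ) - m.1) * ((n.1 : ℤ) - m.1) * ((n.1 : ℤ) - b.1) : ℤ) : ℂ) / 12

/-- The dual volume tensor `ω^{ambn} = -ε_{ambn}` in a right orthonormal frame. -/
noncomputable def omega4 (a m b n : Fin 4) : ℂ := -eps4 a m b n

/-! Split `2 σ_p[r,ū] σ_q[u,r̄]` into its parts symmetric and antisymmetric in `(p, q)`.
For any `2 × 2` matrix `A`, the expression `A[r,ū] A[u,r̄] - A[r,r̄] A[u,ū]` is antisymmetric in
`(r, u)` and in `(r̄, ū)`, hence equal to `-det A · e_{ru} e_{r̄ū}`; polarizing it, and using that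
`det (x^p σ_p)` is the Minkowski form `η(x, x)`, gives the symmetric part. The antisymmetric part
is the Hodge dual term, checked entrywise once the `η`-contractions have collapsed. -/

open Matrix

theorem entry_mul_entry_add_swap_fin_two {R : Type*} [CommRing R]
    (A B : Matrix (Fin 2) (Fin 2) R) (r u rb ub : Fin 2) :
    A r ub * B u rb + B r ub * A u rb
      = A r rb * B u ub + B r rb * A u ub
        - ((A + B).det - A.det - B.det) * !![0, -1; 1, 0] r u * !![(0 : R), -1; 1, 0] rb ub := by
  fin_cases r <;> fin_cases u <;> fin_cases rb <;> fin_cases ub <;>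
    simp [det_fin_two] <;> ring

theorem det_sigma4_add_sub_det_sub_det (p q : Fin 4) :
    (sigma4 p + sigma4 q).det - (sigma4 p).det - (sigma4 q).det = 2 * eta p q := by
  fin_cases p <;> fin_cases q <;> simp [det_fin_two, sigma4, eta] <;> ring_nf <;> norm_num

theorem sigma4_entry_mul_sub_swap (p q : Fin 4) (r u rb ub : Fin 2) :
    sigma4 p r ub * sigma4 q u rb - sigma4 q r ub * sigma4 p u rb
      = Complex.I * (eta p p * (eta q q *
          ∑ m : Fin 4, ∑ n : Fin 4, omega4 p m q n * sigma4 m u ub * sigma4 n r rb)) := by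
  fin_cases p <;> fin_cases q <;>
    simp [Fin.sum_univ_four, omega4, eps4, eta] <;>
    fin_cases r <;> fin_cases u <;> fin_cases rb <;> fin_cases ub <;>
    simp [sigma4] <;> ring_nf <;> norm_num

theorem sum_eta_mul (p : Fin 4) (f : Fin 4 → ℂ) : ∑ a, eta p a * f a = eta p p * f p := by
  rw [sum_eq_single p]
  · intro a _ hap
    simp [eta, Ne.symm hap]
  · simp

/-- The quadratic consequence of the cubic Infeld–van der Waerden identity
(obtained by contracting with `G^{u ū}_m`). -/
theorem contracted_cubic_IvdW_identity (p q : Fin 4) (r u rb ub : Fin 2) :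
    2 * sigma4 p r ub * sigma4 q u rb
      = sigma4 p r rb * sigma4 q u ub + sigma4 q r rb * sigma4 p u ub
        - 2 * esp r u * esp rb ub * eta p q
        + Complex.I * ∑ a : Fin 4, ∑ b : Fin 4, ∑ m : Fin 4, ∑ n : Fin 4,
            eta p a * eta q b * omega4 a m b n * sigma4 m u ub * sigma4 n r rb := by
  have hsymm := entry_mul_entry_add_swap_fin_two (sigma4 p) (sigma4 q) r u rb ub
  rw [det_sigma4_add_sub_det_sub_det] at hsymm
  have hanti := sigma4_entry_mul_sub_swap p q r u rb ub
  have hcontract : ∑ a : Fin 4, ∑ b : Fin 4, ∑ m : Fin 4, ∑ n : Fin 4,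
        eta p a * eta q b * omega4 a m b n * sigma4 m u ub * sigma4 n r rb
      = eta p p * (eta q q *
          ∑ m : Fin 4, ∑ n : Fin 4, omega4 p m q n * sigma4 m u ub * sigma4 n r rb) := by
    simp_rw [mul_assoc, ← mul_sum, sum_eta_mul]
  rw [hcontract, esp]
  linear_combination hsymm + hanti
end

section
/- For all p, q ∈ {0,1,2,3} and all r, u ∈ {1,2}, r̄, ū ∈ {1,2} the antisymmetric quadratic identity holds: (σ_p)_{r,ū} (σ_q)_{u,r̄} − (σ_q)_{r,ū} (σ_p)_{u,r̄} = i · Σ_{a=0}^{3} Σ_{b=0}^{3} Σ_{m=0}^{3} Σ_{n=0}^{3} η_{pa} η_{qb} ω^{ambn} (σ_m)_{u,ū} (σ_n)_{r,r̄}. -/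
open Finset

lemma v3' : (3 : Fin 4).val = 3 := rfl
lemma v2' : (2 : Fin 4).val = 2 := rfl
lemma v1' : (1 : Fin 4).val = 1 := rfl
lemma v0' : (0 : Fin 4).val = 0 := rfl

lemma collapse_eta (p q : Fin 4) (f : Fin 4 → Fin 4 → ℂ) :
    ∑ a : Fin 4, ∑ b : Fin 4, eta p a * eta q b * f a b = eta p p * eta q q * f p q := by
  rw [Finset.sum_eq_single p]
  · rw [Finset.sum_eq_single q]
    · intro b _ hb; simp [eta, (Ne.symm hb)]
    · simp
  · intro a _ ha
    have : eta p a = 0 := by simp [eta, (Ne.symm ha)]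
    simp [this]
  · simp

set_option linter.unreachableTactic false in
set_option linter.unusedTactic false in
set_option maxHeartbeats 4000000 in
/-- The antisymmetric quadratic Infeld–van der Waerden identity. -/
theorem antisymmetric_quadratic_IvdW_identity (p q : Fin 4) (r u rb ub : Fin 2) :
    sigma4 p r ub * sigma4 q u rb - sigma4 q r ub * sigma4 p u rb
      = Complex.I * ∑ a : Fin 4, ∑ b : Fin 4, ∑ m : Fin 4, ∑ n : Fin 4,
          eta p a * eta q b * omega4 a m b n * sigma4 m u ub * sigma4 n r rb := by
  have h : ∀ a b : Fin 4, (∑ m : Fin 4, ∑ n : Fin 4,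
      eta p a * eta q b * omega4 a m b n * sigma4 m u ub * sigma4 n r rb)
      = eta p a * eta q b * (∑ m : Fin 4, ∑ n : Fin 4,
        omega4 a m b n * sigma4 m u ub * sigma4 n r rb) := by
    intro a b
    rw [Finset.mul_sum]
    refine Finset.sum_congr rfl fun m _ => ?_
    rw [Finset.mul_sum]
    exact Finset.sum_congr rfl fun n _ => by ring
  simp only [h]
  rw [collapse_eta p q (fun a b => ∑ m : Fin 4, ∑ n : Fin 4,
        omega4 a m b n * sigma4 m u ub * sigma4 n r rb)]
  clear h
  fin_cases p <;> fin_cases q <;>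
    simp only [eta, omega4, eps4, Fin.sum_univ_four, v0', v1', v2', v3', reduceIte] <;>
    norm_num <;>
    fin_cases r <;> fin_cases u <;> fin_cases rb <;> fin_cases ub <;>
      simp [sigma4] <;> ring_nf <;> simp [Complex.I_sq] <;> ring_nf
end

section
/- For every t ∈ ℝ the trace-derivative identity holds: Σ_{k=1}^{2} Σ_{s̄=1}^{2} Σ_{m=0}^{3} (G_m)_{k,s̄} (S^m_{k,s̄})' = 2 Σ_{s=1}^{2} Σ_{u=1}^{2} (d_{s,u})' e^{u,s} + 2 Σ_{s̄=1}^{2} Σ_{ū=1}^{2} (d̄_{s̄,ū})' ē^{ū,s̄} − Σ_{n=0}^{3} Σ_{m=0}^{3} h^{nm} (g_{n,m})', where ′ denotes the derivative with respect to t. -/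
/-!
Put `Γ = ((G_p)_{r r̄})` (rows `p`, columns `(r, r̄)`), `Σ = (S^q_{s s̄})` and `D = d ⊗ d̄`, so that
`Σ = hᵀ Γ D` and the two quadratic identities read `Γᵀ Σ = 2 = Γ Σᵀ`. The left-hand side is
`tr (Γᵀ Σ')`, and the product rule splits it into three traces. The identities give
`Γ D Γᵀ = 2 gᵀ`, `Γᵀ hᵀ = D⁻¹ Σᵀ` and `Γᵀ hᵀ Γ = 2 D⁻¹`. Hence the `h'` term is
`2 tr (g h') = - 2 tr (h g')`, the `D'` term is `2 tr (D⁻¹ D') = 4 tr (d' e) + 4 tr (d̄' ē)`, and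
the `Γ'` term is `tr (Γ'ᵀ Σ) = - tr (Γᵀ Σ')` because `Γᵀ Σ` is constant. Solving for
`tr (Γᵀ Σ')` gives the identity, once the symmetry of `g` turns `tr (h g')` into
`Σ h^{nm} g'_{nm}`.
-/

open Finset Matrix
open scoped Kronecker

namespace Matrix

section Reshape

variable {R : Type*} [CommSemiring R] {m n p : Type*}

theorem of_mul_of_eq_one [Fintype n] [DecidableEq n] {A B : n → n → R}
    (hAB : ∀ i j, ∑ k, A i k * B k j = if i = j then 1 else 0) : of A * of B = 1 :=
  ext fun i j => by simpa [mul_apply, one_apply] using hAB i j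

theorem transpose_mul_of_uncurry_eq_smul_one [Fintype m] [DecidableEq n] [DecidableEq p]
    {A B : m → n → p → R} {c : R}
    (hAB : ∀ k l k' l', ∑ i, A i k l * B i k' l'
      = c * (if k = k' then 1 else 0) * (if l = l' then 1 else 0)) :
    (of fun i => Function.uncurry (A i))ᵀ * of (fun i => Function.uncurry (B i)) = c • 1 := by
  ext ⟨k, l⟩ ⟨k', l'⟩
  simp only [mul_apply, transpose_apply, of_apply, Function.uncurry_apply_pair, hAB, smul_apply,
    one_apply, Prod.mk.injEq, smul_eq_mul, ite_and]
  split_ifs <;> simp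

theorem mul_transpose_of_uncurry_eq_smul_one [Fintype n] [Fintype p] [DecidableEq m]
    {A B : m → n → p → R} {c : R}
    (hAB : ∀ i j, ∑ k, ∑ l, A i k l * B j k l = c * if i = j then 1 else 0) :
    (of fun i => Function.uncurry (A i)) * (of fun i => Function.uncurry (B i))ᵀ = c • 1 := by
  ext i j
  simp only [mul_apply, transpose_apply, of_apply, Fintype.sum_prod_type,
    Function.uncurry_apply_pair, hAB, smul_apply, one_apply, smul_eq_mul]

theorem of_uncurry_eq_transpose_mul_mul_kronecker [Fintype m] [Fintype n] [Fintype p]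
    {S G : m → n → p → R} {H : Matrix m m R} {A : Matrix n n R} {B : Matrix p p R}
    (hS : ∀ q k l, S q k l = ∑ k', ∑ l', ∑ i, G i k' l' * H i q * A k' k * B l' l) :
    of (fun q => Function.uncurry (S q))
      = Hᵀ * of (fun i => Function.uncurry (G i)) * (A ⊗ₖ B) := by
  ext q ⟨k, l⟩
  simp only [mul_apply, transpose_apply, of_apply, Function.uncurry_apply_pair, hS,
    kronecker_apply, Fintype.sum_prod_type, sum_mul]
  refine sum_congr rfl fun k' _ => sum_congr rfl fun l' _ => sum_congr rfl fun i _ => ?_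
  ring

end Reshape

section Calculus

variable {R : Type*} [NormedRing R] [NormedAlgebra ℝ R] {l m n p : Type*}

noncomputable def entrywiseDeriv (M : ℝ → Matrix m n R) (t : ℝ) : Matrix m n R :=
  of fun i j => deriv (fun x => M x i j) t

def EntrywiseDifferentiableAt (M : ℝ → Matrix m n R) (t : ℝ) : Prop :=
  ∀ i j, DifferentiableAt ℝ (fun x => M x i j) t

variable {t : ℝ}

theorem hasDerivAt_mul_apply [Fintype m] {A : ℝ → Matrix l m R} {B : ℝ → Matrix m n R}
    (hA : EntrywiseDifferentiableAt A t) (hB : EntrywiseDifferentiableAt B t) (i : l) (k : n) :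
    HasDerivAt (fun x => (A x * B x) i k)
      ((entrywiseDeriv A t * B t + A t * entrywiseDeriv B t) i k) t := by
  simp only [mul_apply, add_apply, ← sum_add_distrib]
  exact HasDerivAt.fun_sum fun j _ => (hA i j).hasDerivAt.mul (hB j k).hasDerivAt

theorem EntrywiseDifferentiableAt.mul [Fintype m] {A : ℝ → Matrix l m R}
    {B : ℝ → Matrix m n R}
    (hA : EntrywiseDifferentiableAt A t) (hB : EntrywiseDifferentiableAt B t) :
    EntrywiseDifferentiableAt (fun x => A x * B x) t :=
  fun i k => (hasDerivAt_mul_apply hA hB i k).differentiableAt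

theorem entrywiseDeriv_mul [Fintype m] {A : ℝ → Matrix l m R} {B : ℝ → Matrix m n R}
    (hA : EntrywiseDifferentiableAt A t) (hB : EntrywiseDifferentiableAt B t) :
    entrywiseDeriv (fun x => A x * B x) t = entrywiseDeriv A t * B t + A t * entrywiseDeriv B t :=
  ext fun i k => (hasDerivAt_mul_apply hA hB i k).deriv

theorem entrywiseDeriv_mul_add_mul_entrywiseDeriv_eq_zero [Fintype m] {A : ℝ → Matrix l m R}
    {B : ℝ → Matrix m n R} {C : Matrix l n R} (hA : EntrywiseDifferentiableAt A t)
    (hB : EntrywiseDifferentiableAt B t) (hAB : ∀ x, A x * B x = C) :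
    entrywiseDeriv A t * B t + A t * entrywiseDeriv B t = 0 := by
  rw [← entrywiseDeriv_mul hA hB]
  ext i k
  simp [entrywiseDeriv, hAB]

theorem EntrywiseDifferentiableAt.transpose {A : ℝ → Matrix m n R}
    (hA : EntrywiseDifferentiableAt A t) : EntrywiseDifferentiableAt (fun x => (A x)ᵀ) t :=
  fun i j => hA j i

theorem entrywiseDeriv_transpose (A : ℝ → Matrix m n R) :
    entrywiseDeriv (fun x => (A x)ᵀ) t = (entrywiseDeriv A t)ᵀ :=
  rfl

theorem hasDerivAt_kronecker_apply {A : ℝ → Matrix l m R} {B : ℝ → Matrix n p R}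
    (hA : EntrywiseDifferentiableAt A t) (hB : EntrywiseDifferentiableAt B t) (i j) :
    HasDerivAt (fun x => (A x ⊗ₖ B x) i j)
      ((entrywiseDeriv A t ⊗ₖ B t + A t ⊗ₖ entrywiseDeriv B t) i j) t :=
  (hA i.1 j.1).hasDerivAt.mul (hB i.2 j.2).hasDerivAt

theorem EntrywiseDifferentiableAt.kronecker {A : ℝ → Matrix l m R} {B : ℝ → Matrix n p R}
    (hA : EntrywiseDifferentiableAt A t) (hB : EntrywiseDifferentiableAt B t) :
    EntrywiseDifferentiableAt (fun x => A x ⊗ₖ B x) t :=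
  fun i j => (hasDerivAt_kronecker_apply hA hB i j).differentiableAt

theorem entrywiseDeriv_kronecker {A : ℝ → Matrix l m R} {B : ℝ → Matrix n p R}
    (hA : EntrywiseDifferentiableAt A t) (hB : EntrywiseDifferentiableAt B t) :
    entrywiseDeriv (fun x => A x ⊗ₖ B x) t
      = entrywiseDeriv A t ⊗ₖ B t + A t ⊗ₖ entrywiseDeriv B t :=
  ext fun i j => (hasDerivAt_kronecker_apply hA hB i j).deriv

end Calculus

section Inverse

variable {𝕜 : Type*} [NormedField 𝕜] [NormedAlgebra ℝ 𝕜] {n : Type*} [Fintype n]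
  [DecidableEq n] {t : ℝ}

theorem EntrywiseDifferentiableAt.det {A : ℝ → Matrix n n 𝕜}
    (hA : EntrywiseDifferentiableAt A t) : DifferentiableAt ℝ (fun x => (A x).det) t := by
  simp only [det_apply']
  exact DifferentiableAt.fun_sum fun σ _ =>
    (DifferentiableAt.fun_finsetProd fun i _ => hA (σ i) i).const_mul _

theorem EntrywiseDifferentiableAt.of_mul_eq_one {A B : ℝ → Matrix n n 𝕜}
    (hA : EntrywiseDifferentiableAt A t) (hAB : ∀ x, A x * B x = 1) :
    EntrywiseDifferentiableAt B t := by
  intro i j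
  -- Cramer's rule: `B = (det A)⁻¹ • adjugate A`, whose entries are determinants.
  have hB : (fun x => B x i j)
      = fun x => ((A x).det)⁻¹ * ((A x).updateRow j (Pi.single i 1)).det := by
    ext x
    rw [← inv_eq_right_inv (hAB x), inv_def, smul_apply, adjugate_apply, Ring.inverse_eq_inv,
      smul_eq_mul]
  have hdet : (A t).det ≠ 0 := fun h0 => by
    simpa [h0] using congrArg Matrix.det (hAB t)
  rw [hB]
  refine (hA.det.inv hdet).mul (EntrywiseDifferentiableAt.det fun a b => ?_)
  by_cases hab : a = j
  · subst hab
    simp only [updateRow_self]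
    exact differentiableAt_const _
  · simpa only [updateRow_ne hab] using hA a b

end Inverse

section Algebra

variable {𝕜 : Type*} [Field 𝕜] {m n : Type*} [Fintype m] [Fintype n] [DecidableEq m]
  [DecidableEq n]

theorem trace_kronecker_mul_add_kronecker {A A' E : Matrix m m 𝕜} {B B' F : Matrix n n 𝕜}
    (hAE : A * E = 1) (hBF : B * F = 1) :
    trace ((E ⊗ₖ F) * (A' ⊗ₖ B + A ⊗ₖ B'))
      = Fintype.card n * trace (A' * E) + Fintype.card m * trace (B' * F) := by
  rw [Matrix.mul_add, ← mul_kronecker_mul, ← mul_kronecker_mul, trace_add, trace_kronecker,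
    trace_kronecker, trace_mul_comm F, hBF, trace_mul_comm E A, hAE, trace_one, trace_one,
    trace_mul_comm E, trace_mul_comm F]
  ring

theorem two_mul_trace_transpose_mul_eq_of_eq_mul_mul {Γ Γ' S S' : Matrix m n 𝕜}
    {H H' K : Matrix m m 𝕜} {D D' E : Matrix n n 𝕜} {c : 𝕜} (hc : c ≠ 0) (hS : S = H * Γ * D)
    (hS' : S' = H' * Γ * D + H * Γ' * D + H * Γ * D')
    (hleft : Γᵀ * S = c • 1) (hright : Γ * Sᵀ = c • 1) (hKH : K * H = 1) (hDE : D * E = 1)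
    (hderiv : Γ'ᵀ * S + Γᵀ * S' = 0) :
    2 * trace (Γᵀ * S') = c * (trace (H' * K) + trace (E * D')) := by
  have hΓDΓ : Γ * D * Γᵀ = c • K := by
    have hright' : H * Γ * D * Γᵀ = c • 1 := by
      simpa [hS] using congrArg transpose hright
    calc Γ * D * Γᵀ = K * (H * Γ * D * Γᵀ) := by
          simp only [Matrix.mul_assoc, ← Matrix.mul_assoc K, hKH, Matrix.one_mul]
      _ = c • K := by rw [hright', Matrix.mul_smul, Matrix.mul_one]
  have hΓH : Γᵀ * H = E * Sᵀ := by
    refine smul_right_injective _ hc ?_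
    calc c • (Γᵀ * H) = Γᵀ * H * (Γ * Sᵀ) := by rw [hright, Matrix.mul_smul, Matrix.mul_one]
      _ = Γᵀ * S * E * Sᵀ := by simp only [hS, Matrix.mul_assoc, hDE, Matrix.one_mul]
      _ = c • (E * Sᵀ) := by rw [hleft, Matrix.smul_mul, Matrix.one_mul, Matrix.smul_mul]
  have hΓHΓ : Γᵀ * H * Γ = c • E := by
    calc Γᵀ * H * Γ = Γᵀ * S * E := by simp only [hS, Matrix.mul_assoc, hDE, Matrix.mul_one]
      _ = c • E := by rw [hleft, Matrix.smul_mul, Matrix.one_mul]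
  have h1 : trace (Γᵀ * (H' * Γ * D)) = c * trace (H' * K) := by
    rw [trace_mul_comm, Matrix.mul_assoc, Matrix.mul_assoc, ← Matrix.mul_assoc Γ, hΓDΓ,
      Matrix.mul_smul, trace_smul, smul_eq_mul]
  have h2 : trace (Γᵀ * (H * Γ' * D)) = trace (Γ'ᵀ * S) := by
    rw [← trace_transpose (Γ'ᵀ * S), transpose_mul, transpose_transpose]
    calc trace (Γᵀ * (H * Γ' * D)) = trace (E * Sᵀ * Γ' * D) := by
          simp only [← hΓH, Matrix.mul_assoc]
      _ = trace (Sᵀ * Γ') := by rw [trace_mul_cycle, ← Matrix.mul_assoc, hDE, Matrix.one_mul]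
  have h3 : trace (Γᵀ * (H * Γ * D')) = c * trace (E * D') := by
    rw [← Matrix.mul_assoc, ← Matrix.mul_assoc, hΓHΓ, Matrix.smul_mul, trace_smul, smul_eq_mul]
  have hsum : trace (Γᵀ * S') = c * trace (H' * K) + trace (Γ'ᵀ * S) + c * trace (E * D') := by
    rw [hS', Matrix.mul_add, Matrix.mul_add, trace_add, trace_add, h1, h2, h3]
  have hzero := congrArg trace hderiv
  rw [trace_add, trace_zero] at hzero
  linear_combination hsum + hzero

end Algebra

section TraceDerivative

variable {𝕜 : Type*} [NormedField 𝕜] [NormedAlgebra ℝ 𝕜] {m n p : Type*} [Fintype m]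
  [Fintype n] [Fintype p] [DecidableEq m] [DecidableEq n] [DecidableEq p] {t : ℝ}

theorem trace_mul_entrywiseDeriv_of_mul_eq_one {A B : ℝ → Matrix n n 𝕜}
    (hA : EntrywiseDifferentiableAt A t) (hB : EntrywiseDifferentiableAt B t)
    (hAB : ∀ x, A x * B x = 1) :
    trace (A t * entrywiseDeriv B t) = -trace (B t * entrywiseDeriv A t) := by
  have h := congrArg trace (entrywiseDeriv_mul_add_mul_entrywiseDeriv_eq_zero hA hB hAB)
  rw [trace_add, trace_zero, trace_mul_comm (entrywiseDeriv A t)] at h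
  linear_combination h

theorem two_mul_trace_transpose_mul_entrywiseDeriv {Γ S : ℝ → Matrix m n 𝕜}
    {H K : ℝ → Matrix m m 𝕜} {D E : ℝ → Matrix n n 𝕜} {c : 𝕜} (hc : c ≠ 0)
    (hΓ : EntrywiseDifferentiableAt Γ t) (hH : EntrywiseDifferentiableAt H t)
    (hD : EntrywiseDifferentiableAt D t) (hS : ∀ x, S x = H x * Γ x * D x)
    (hleft : ∀ x, (Γ x)ᵀ * S x = c • 1) (hright : Γ t * (S t)ᵀ = c • 1)
    (hKH : K t * H t = 1) (hDE : D t * E t = 1) :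
    2 * trace ((Γ t)ᵀ * entrywiseDeriv S t)
      = c * (trace (entrywiseDeriv H t * K t) + trace (E t * entrywiseDeriv D t)) := by
  obtain rfl : S = fun x => H x * Γ x * D x := funext hS
  have hS' := entrywiseDeriv_mul (hH.mul hΓ) hD
  rw [entrywiseDeriv_mul hH hΓ, Matrix.add_mul] at hS'
  exact two_mul_trace_transpose_mul_eq_of_eq_mul_mul hc rfl hS' (hleft t) hright hKH hDE
    (entrywiseDeriv_mul_add_mul_entrywiseDeriv_eq_zero hΓ.transpose ((hH.mul hΓ).mul hD) hleft)

theorem two_mul_trace_transpose_mul_entrywiseDeriv_of_kronecker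
    {Γ S : ℝ → Matrix m (n × p) 𝕜} {g h : ℝ → Matrix m m 𝕜} {A E : ℝ → Matrix n n 𝕜}
    {B F : ℝ → Matrix p p 𝕜} {c : 𝕜} (hc : c ≠ 0) (hΓ : EntrywiseDifferentiableAt Γ t)
    (hg : EntrywiseDifferentiableAt g t) (hA : EntrywiseDifferentiableAt A t)
    (hB : EntrywiseDifferentiableAt B t) (hgh : ∀ x, g x * h x = 1) (hAE : A t * E t = 1)
    (hBF : B t * F t = 1)
    (hS : ∀ x, S x = (h x)ᵀ * Γ x * (A x ⊗ₖ B x))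
    (hleft : ∀ x, (Γ x)ᵀ * S x = c • 1) (hright : Γ t * (S t)ᵀ = c • 1) :
    2 * trace ((Γ t)ᵀ * entrywiseDeriv S t)
      = c * (Fintype.card p * trace (entrywiseDeriv A t * E t)
        + Fintype.card n * trace (entrywiseDeriv B t * F t)
        - trace (h t * entrywiseDeriv g t)) := by
  have hh := hg.of_mul_eq_one hgh
  have hKH : (g t)ᵀ * (h t)ᵀ = 1 := by
    rw [← transpose_mul, mul_eq_one_comm.mp (hgh t), transpose_one]
  have hDE : (A t ⊗ₖ B t) * (E t ⊗ₖ F t) = 1 := by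
    rw [← mul_kronecker_mul, hAE, hBF, one_kronecker_one]
  have hH' : trace (entrywiseDeriv (fun x => (h x)ᵀ) t * (g t)ᵀ)
      = -trace (h t * entrywiseDeriv g t) := by
    rw [entrywiseDeriv_transpose, ← transpose_mul, trace_transpose,
      trace_mul_entrywiseDeriv_of_mul_eq_one hg hh hgh]
  rw [two_mul_trace_transpose_mul_entrywiseDeriv (K := fun x => (g x)ᵀ)
      (E := fun x => E x ⊗ₖ F x) hc hΓ hh.transpose (hA.kronecker hB) hS hleft hright hKH hDE,
    entrywiseDeriv_kronecker hA hB, trace_kronecker_mul_add_kronecker hAE hBF, hH']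
  ring

end TraceDerivative

end Matrix

/-- The trace-derivative identity
`Σ_{k,s̄,m} (G_m)_{k,s̄} (S^m_{k,s̄})' = 2 Σ_{s,u} (d_{s,u})' e^{u,s}
  + 2 Σ_{s̄,ū} (d̄_{s̄,ū})' ē^{ū,s̄} - Σ_{n,m} h^{nm} (g_{n,m})'`. -/
theorem IvdW_trace_derivative
    (g h : ℝ → Fin 4 → Fin 4 → ℝ)
    (hg_symm : ∀ t i j, g t i j = g t j i)
    (hg_diff : ∀ i j, Differentiable ℝ (fun t => g t i j))
    (hgh : ∀ t p q, ∑ r : Fin 4, g t p r * h t r q = if p = q then (1 : ℝ) else 0)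
    (d e : ℝ → Fin 2 → Fin 2 → ℂ)
    (hd_diff : ∀ i j, Differentiable ℝ (fun t => d t i j))
    (hde : ∀ t j i, ∑ r : Fin 2, d t j r * e t r i = if j = i then (1 : ℂ) else 0)
    (G : ℝ → Fin 4 → Fin 2 → Fin 2 → ℂ)
    (hG_diff : ∀ p i j, Differentiable ℝ (fun t => G t p i j))
    (S : ℝ → Fin 4 → Fin 2 → Fin 2 → ℂ)
    (hS : ∀ t q s sb, S t q s sb
      = ∑ r : Fin 2, ∑ rb : Fin 2, ∑ p : Fin 4,
          G t p r rb * (h t p q : ℂ) * d t r s * star (d t rb sb))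
    (hquad1 : ∀ t p q, ∑ r : Fin 2, ∑ rb : Fin 2, G t p r rb * S t q r rb
      = 2 * (if p = q then (1 : ℂ) else 0))
    (hquad2 : ∀ t (r rb s sb : Fin 2), ∑ q : Fin 4, G t q r rb * S t q s sb
      = 2 * (if r = s then (1 : ℂ) else 0) * (if rb = sb then (1 : ℂ) else 0))
    : ∀ t : ℝ,
      ∑ k : Fin 2, ∑ sb : Fin 2, ∑ m : Fin 4,
          G t m k sb * deriv (fun x => S x m k sb) t
        = 2 * (∑ s : Fin 2, ∑ u : Fin 2, deriv (fun x => d x s u) t * e t u s)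
          + 2 * (∑ sb : Fin 2, ∑ ub : Fin 2,
              deriv (fun x => star (d x sb ub)) t * star (e t ub sb))
          - ∑ n : Fin 4, ∑ m : Fin 4, (h t n m : ℂ) * (deriv (fun x => g x n m) t : ℂ) := by
  intro t
  set Γ : ℝ → Matrix (Fin 4) (Fin 2 × Fin 2) ℂ := fun x => of fun p => Function.uncurry (G x p)
  set Sm : ℝ → Matrix (Fin 4) (Fin 2 × Fin 2) ℂ := fun x => of fun p => Function.uncurry (S x p)
  set gC := fun x => (of (g x)).map Complex.ofRealHom
  set hC := fun x => (of (h x)).map Complex.ofRealHom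
  set dbar := fun x => (of (d x)).map (starRingEnd ℂ)
  set ebar := fun x => (of (e x)).map (starRingEnd ℂ)
  have hgh' : ∀ x, gC x * hC x = 1 := fun x => by
    rw [← Matrix.map_mul, of_mul_of_eq_one (hgh x), Matrix.map_one _ (map_zero _) (map_one _)]
  have hde' : of (d t) * of (e t) = 1 := of_mul_of_eq_one (hde t)
  have hdebar : dbar t * ebar t = 1 := by
    rw [← Matrix.map_mul, hde', Matrix.map_one _ (map_zero _) (map_one _)]
  have key := two_mul_trace_transpose_mul_entrywiseDeriv_of_kronecker (Γ := Γ) (S := Sm)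
    (g := gC) (h := hC) (A := fun x => of (d x)) (B := dbar) (E := fun x => of (e x)) (F := ebar)
    two_ne_zero (fun p a => hG_diff p a.1 a.2 t)
    (fun i j => (hg_diff i j t).hasDerivAt.ofReal_comp.differentiableAt)
    (fun i j => hd_diff i j t) (fun i j => (hd_diff i j t).hasDerivAt.star.differentiableAt)
    hgh' hde' hdebar (fun x => of_uncurry_eq_transpose_mul_mul_kronecker (hS x))
    (fun x => transpose_mul_of_uncurry_eq_smul_one (hquad2 x))
    (mul_transpose_of_uncurry_eq_smul_one (hquad1 t))
  have hg'_symm : (entrywiseDeriv gC t)ᵀ = entrywiseDeriv gC t := by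
    ext i j
    simp only [transpose_apply, entrywiseDeriv, map_apply, of_apply, gC, hg_symm _ j i]
  rw [← hg'_symm] at key
  simp only [trace, diag_apply, mul_apply, transpose_apply, entrywiseDeriv, map_apply, of_apply,
    Complex.ofRealHom_eq_coe, starRingEnd_apply, Γ, Sm, gC, hC, dbar, ebar, Fintype.sum_prod_type,
    Function.uncurry_apply_pair, Fintype.card_fin] at key
  linear_combination key / 2
end

section
/- The spinor connection coefficients A defined by the explicit formula satisfy the spinor-metric concordance condition (∇d = 0 in the given frame direction): for all i, j ∈ {1,2} and all t ∈ ℝ, (d_{i,j})' − Σ_{k=1}^{2} A^k_i d_{k,j} − Σ_{k=1}^{2} A^k_j d_{i,k} = 0. -/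
/-!
A skew `2 × 2` matrix is a multiple of `!![0, 1; -1, 0]`; write `d = a ε` and `d̄ = b ε`.
The map `d ↦ d' - Aᵀ d - d A` preserves skewness, so the concordance condition is the single
equation `a' = (tr A) a`. Of the three terms of `tr A`, the `Γ`-term is `½ tr Γ` by the
Infeld–van der Waerden identity, and the last is `-b'/b` since `tr (d̄' d̄⁻¹) = 2 b'/b`.
For the middle one, the Infeld–van der Waerden identity says `a b · detPolar (G_p, G_q) = 2 g_pq`;
differentiating, contracting with `h = g⁻¹` and using `tr (h g') = 2 tr Γ` (metric compatibility)
gives `Σ_q ⟨G_q', S^q⟩ = 2 tr Γ - 4 (ab)'/(ab)`. Altogether `tr A = a'/a`.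
-/

open Finset Matrix

section SpinorAlgebra

variable {R : Type*} [CommRing R]

/-- The polarization of the `2 × 2` determinant: `det (X + Y) = det X + det Y + detPolar X Y`. -/
def detPolar (X Y : Fin 2 → Fin 2 → R) : R :=
  X 0 0 * Y 1 1 - X 0 1 * Y 1 0 - X 1 0 * Y 0 1 + X 1 1 * Y 0 0

theorem detPolar_comm (X Y : Fin 2 → Fin 2 → R) : detPolar X Y = detPolar Y X := by
  unfold detPolar; ring

variable [NoZeroDivisors R] [CharZero R]

theorem skew_fin_two_entries {J : Fin 2 → Fin 2 → R} (hJ : ∀ i j, J i j = -J j i) :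
    J 0 0 = 0 ∧ J 1 1 = 0 ∧ J 1 0 = -J 0 1 :=
  ⟨CharZero.eq_neg_self_iff.mp (hJ 0 0), CharZero.eq_neg_self_iff.mp (hJ 1 1), hJ 1 0⟩

theorem eq_zero_of_skew_fin_two {J : Fin 2 → Fin 2 → R} (hJ : ∀ i j, J i j = -J j i)
    (h01 : J 0 1 = 0) (i j : Fin 2) : J i j = 0 := by
  obtain ⟨h00, h11, h10⟩ := skew_fin_two_entries hJ
  fin_cases i <;> fin_cases j <;> simp [h00, h11, h10, h01]

theorem skew_fin_two_zero_one_ne_zero {J E : Fin 2 → Fin 2 → R} (hJ : ∀ i j, J i j = -J j i)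
    (hJE : ∀ j i, ∑ r, J j r * E r i = if j = i then 1 else 0) : J 0 1 ≠ 0 := by
  have h := hJE 0 0
  simp only [Fin.sum_univ_two, (skew_fin_two_entries hJ).1, zero_mul, zero_add, if_true] at h
  exact left_ne_zero_of_mul_eq_one h

/-- A skew `2 × 2` matrix is determined by its `(0, 1)` entry, and `J' - Aᵀ J - J A` is skew. -/
theorem sub_sum_mul_sub_sum_mul_eq_zero {J J' A : Fin 2 → Fin 2 → R}
    (hJ : ∀ i j, J i j = -J j i) (hJ' : ∀ i j, J' i j = -J' j i)
    (h01 : J' 0 1 = (A 0 0 + A 1 1) * J 0 1) (i j : Fin 2) :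
    J' i j - ∑ k, A k i * J k j - ∑ k, A k j * J i k = 0 := by
  refine eq_zero_of_skew_fin_two (J := fun i j => J' i j - ∑ k, A k i * J k j - ∑ k, A k j * J i k)
    (fun i j => ?_) ?_ i j
  · simp only [Fin.sum_univ_two]
    rw [hJ' i j, hJ 0 j, hJ 1 j, hJ i 0, hJ i 1]
    ring
  · obtain ⟨h00, h11, -⟩ := skew_fin_two_entries hJ
    simp only [Fin.sum_univ_two, h00, h11, h01]
    ring

theorem sum_mul_sum_skew_eq_detPolar {κ : Type*} [Fintype κ] {d D : Fin 2 → Fin 2 → R}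
    (hd : ∀ i j, d i j = -d j i) (hD : ∀ i j, D i j = -D j i) (X : Fin 2 → Fin 2 → R)
    (G : κ → Fin 2 → Fin 2 → R) (w : κ → R) :
    ∑ r, ∑ rb, X r rb * ∑ s, ∑ sb, ∑ p, G p s sb * w p * d s r * D sb rb
      = d 0 1 * D 0 1 * ∑ p, w p * detPolar X (G p) := by
  obtain ⟨d00, d11, d10⟩ := skew_fin_two_entries hd
  obtain ⟨D00, D11, D10⟩ := skew_fin_two_entries hD
  simp only [Fin.sum_univ_two, mul_sum, ← sum_add_distrib]
  refine sum_congr rfl fun p _ => ?_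
  simp only [detPolar, d00, d11, d10, D00, D11, D10]
  ring

theorem sum_sum_sum_mul_eq_detPolar {ι : Type*} [Fintype ι] {h : ι → ι → R}
    {d D : Fin 2 → Fin 2 → R} (hd : ∀ i j, d i j = -d j i) (hD : ∀ i j, D i j = -D j i)
    {G S : ι → Fin 2 → Fin 2 → R}
    (hS : ∀ q s sb, S q s sb = ∑ r, ∑ rb, ∑ p, G p r rb * h p q * d r s * D rb sb)
    (X : ι → Fin 2 → Fin 2 → R) :
    ∑ i, ∑ sb, ∑ q, X q i sb * S q i sb
      = d 0 1 * D 0 1 * ∑ q, ∑ p, h p q * detPolar (X q) (G p) := by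
  simp only [mul_sum, ← sum_mul_sum_skew_eq_detPolar hd hD, hS, Fin.sum_univ_two, sum_add_distrib]

end SpinorAlgebra

section MetricAlgebra

variable {R : Type*} [CommRing R] {ι : Type*} [Fintype ι] [DecidableEq ι]

theorem trace_mul_eq_two_trace_of_compat {g h Γ g' : Matrix ι ι R} (hgh : g * h = 1)
    (hg : gᵀ = g) (hcompat : g * Γ + (g * Γ)ᵀ = g') : trace (h * g') = 2 * trace Γ := by
  rw [← hcompat, mul_add, trace_add, ← mul_assoc, mul_eq_one_comm.mp hgh, one_mul, transpose_mul,
    hg, trace_mul_comm, mul_assoc, hgh, mul_one, trace_transpose, two_mul]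

theorem transpose_eq_of_mul_eq_one {g h : Matrix ι ι R} (hgh : g * h = 1) (hg : gᵀ = g) :
    hᵀ = h := by
  rw [← inv_eq_right_inv hgh]
  exact IsSymm.inv hg

theorem sum_sum_mul_mul_eq_two_trace {κ κ' : Type*} [Fintype κ] [Fintype κ']
    {G S : ι → κ → κ' → R} (Γ : ι → ι → R)
    (hquad : ∀ p q, ∑ r, ∑ rb, G p r rb * S q r rb = 2 * if p = q then 1 else 0) :
    ∑ i, ∑ sb, ∑ p, ∑ q, G p i sb * Γ p q * S q i sb = 2 * ∑ p, Γ p p := by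
  calc ∑ i, ∑ sb, ∑ p, ∑ q, G p i sb * Γ p q * S q i sb
      = ∑ p, ∑ q, Γ p q * ∑ r, ∑ rb, G p r rb * S q r rb := by
        simp only [mul_sum, ← Fintype.sum_prod_type']
        exact Fintype.sum_equiv ((Equiv.prodAssoc _ _ _).symm.trans
          ((Equiv.prodComm _ _).trans (Equiv.prodAssoc _ _ _))) _ _ fun x => by simp; ring
    _ = 2 * ∑ p, Γ p p := by simp [hquad, mul_sum, mul_comm]

theorem mul_detPolar_eq_of_mul_eq_one {g h : Matrix ι ι R} (hgh : g * h = 1) {c : R}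
    {G : ι → Fin 2 → Fin 2 → R}
    (hquad : ∀ p q, c * ∑ m, h m q * detPolar (G p) (G m) = 2 * if p = q then 1 else 0)
    (p q : ι) : c * detPolar (G p) (G q) = 2 * g p q := by
  set β : Matrix ι ι R := of fun p m => c * detPolar (G p) (G m)
  have hβh : β * h = (2 : R) • 1 := by
    ext p q
    rw [mul_apply, Matrix.smul_apply, one_apply, smul_eq_mul, ← hquad, mul_sum]
    exact sum_congr rfl fun m _ => by simp only [β, of_apply]; ring
  have hβ : β = (2 : R) • g := by
    rw [← mul_one β, ← mul_eq_one_comm.mp hgh, ← mul_assoc, hβh, smul_mul_assoc, one_mul]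
  simpa [β] using congrFun (congrFun hβ p) q

variable [NoZeroDivisors R] [CharZero R]

theorem mul_detPolar_eq_metric {g h : Matrix ι ι R} (hgh : g * h = 1)
    {d D : Fin 2 → Fin 2 → R} (hd : ∀ i j, d i j = -d j i) (hD : ∀ i j, D i j = -D j i)
    {G S : ι → Fin 2 → Fin 2 → R}
    (hS : ∀ q s sb, S q s sb = ∑ r, ∑ rb, ∑ p, G p r rb * h p q * d r s * D rb sb)
    (hquad : ∀ p q, ∑ r, ∑ rb, G p r rb * S q r rb = 2 * if p = q then 1 else 0) (p q : ι) :
    d 0 1 * D 0 1 * detPolar (G p) (G q) = 2 * g p q :=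
  mul_detPolar_eq_of_mul_eq_one hgh (fun p q => by
    rw [← hquad p q, ← sum_mul_sum_skew_eq_detPolar hd hD]
    simp only [hS]) p q

/-- Differentiating `c β = 2 g` and contracting with `h = g⁻¹`: by the symmetry of `detPolar` and
of `h`, the two terms coming from `β'` are equal. -/
theorem sq_mul_sum_detPolar_eq {g h g' : Matrix ι ι R}
    (hgh : g * h = 1) (hg : gᵀ = g) {c c' : R} {G G' : ι → Fin 2 → Fin 2 → R}
    (hmetric : ∀ p q, c * detPolar (G p) (G q) = 2 * g p q)
    (hderiv : ∀ p q, c' * detPolar (G p) (G q)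
      + c * (detPolar (G' p) (G q) + detPolar (G p) (G' q)) = 2 * g' p q) :
    c ^ 2 * ∑ q, ∑ p, h p q * detPolar (G' q) (G p)
      = c * trace (h * g') - Fintype.card ι * c' := by
  set β : Matrix ι ι R := of fun p q => detPolar (G p) (G q)
  set β' : Matrix ι ι R := of fun p q => detPolar (G' p) (G q)
  have hβ : c • β = (2 : R) • g := by ext p q; simp [β, hmetric]
  have hβ' : c' • β + c • (β' + β'ᵀ) = (2 : R) • g' := by
    ext p q
    rw [Matrix.smul_apply, smul_eq_mul, ← hderiv, detPolar_comm (G p) (G' q)]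
    simp only [β, β', Matrix.add_apply, Matrix.smul_apply, transpose_apply, of_apply, smul_eq_mul]
  have hU : ∑ q, ∑ p, h p q * detPolar (G' q) (G p) = trace (β' * h) := by
    simp [β', trace, mul_apply, mul_comm]
  have htr : c * trace (h * β) = 2 * Fintype.card ι := by
    rw [← smul_eq_mul, ← trace_smul, ← mul_smul_comm, hβ, mul_smul_comm, mul_eq_one_comm.mp hgh,
      trace_smul, trace_one, smul_eq_mul]
  have htrT : trace (h * β'ᵀ) = trace (β' * h) := by
    rw [← trace_transpose, transpose_mul, transpose_transpose, transpose_eq_of_mul_eq_one hgh hg]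
  have htr' : c' * trace (h * β) + 2 * c * trace (β' * h) = 2 * trace (h * g') := by
    have := congrArg (fun M => trace (h * M)) hβ'
    simp only [mul_add, mul_smul_comm, trace_add, trace_smul, smul_eq_mul, htrT,
      trace_mul_comm h β'] at this
    linear_combination this
  rw [hU]
  apply mul_left_cancel₀ (two_ne_zero : (2 : R) ≠ 0)
  linear_combination c * htr' - c' * htr

end MetricAlgebra

section Derivatives

variable {𝕜 : Type*} [NontriviallyNormedField 𝕜]

theorem HasDerivAt.detPolar {𝔸 : Type*} [NormedCommRing 𝔸] [NormedAlgebra 𝕜 𝔸]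
    {X Y : 𝕜 → Fin 2 → Fin 2 → 𝔸} {X' Y' : Fin 2 → Fin 2 → 𝔸} {t : 𝕜}
    (hX : ∀ i j, HasDerivAt (fun x => X x i j) (X' i j) t)
    (hY : ∀ i j, HasDerivAt (fun x => Y x i j) (Y' i j) t) :
    HasDerivAt (fun x => detPolar (X x) (Y x)) (detPolar X' (Y t) + detPolar (X t) Y') t := by
  have := ((((hX 0 0).fun_mul (hY 1 1)).fun_sub ((hX 0 1).fun_mul (hY 1 0))).fun_sub
    ((hX 1 0).fun_mul (hY 0 1))).fun_add ((hX 1 1).fun_mul (hY 0 0))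
  unfold _root_.detPolar
  exact this.congr_deriv (by ring)

theorem deriv_skew {ι F : Type*} [NormedAddCommGroup F] [NormedSpace 𝕜 F] {d : 𝕜 → ι → ι → F}
    (hd : ∀ x i j, d x i j = -d x j i) (t : 𝕜) (i j : ι) :
    deriv (fun x => d x i j) t = -deriv (fun x => d x j i) t := by
  rw [show (fun x => d x i j) = fun x => -d x j i from funext fun x => hd x i j, deriv.fun_neg]

theorem mul_sum_deriv_mul_inv_eq {F : Type*} [NormedField F] [NormedSpace 𝕜 F] [CharZero F]
    {D : 𝕜 → Fin 2 → Fin 2 → F} {E : Fin 2 → Fin 2 → F} {t : 𝕜}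
    (hD : ∀ x i j, D x i j = -D x j i)
    (hDE : ∀ j i, ∑ r, D t j r * E r i = if j = i then 1 else 0) :
    D t 0 1 * ∑ i, ∑ j, deriv (fun x => D x j i) t * E i j = 2 * deriv (fun x => D x 0 1) t := by
  obtain ⟨D00, D11, D10⟩ := skew_fin_two_entries (hD t)
  obtain ⟨D'00, D'11, D'10⟩ := skew_fin_two_entries (deriv_skew hD t)
  have h00 := hDE 0 0
  have h11 := hDE 1 1
  simp only [Fin.sum_univ_two, D00, D11, D10, if_true] at h00 h11 ⊢
  simp only [D'00, D'11, D'10]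
  linear_combination deriv (fun x => D x 0 1) t * (h00 + h11)

end Derivatives

theorem deriv_metric_eq_of_mul_detPolar {ι : Type*} {g : ℝ → ι → ι → ℝ} {c : ℝ → ℂ} {c' : ℂ}
    {G : ℝ → ι → Fin 2 → Fin 2 → ℂ} {t : ℝ}
    (hmetric : ∀ x p q, c x * detPolar (G x p) (G x q) = 2 * g x p q)
    (hc : HasDerivAt c c' t) (hG : ∀ p i j, Differentiable ℝ (fun x => G x p i j))
    (hg : ∀ p q, Differentiable ℝ (fun x => g x p q)) (p q : ι) :
    c' * detPolar (G t p) (G t q) + c t * (detPolar (fun i j => deriv (fun x => G x p i j) t) (G t q)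
      + detPolar (G t p) (fun i j => deriv (fun x => G x q i j) t))
      = 2 * ((deriv (fun x => g x p q) t : ℝ) : ℂ) := by
  have hlhs := hc.fun_mul (HasDerivAt.detPolar (fun i j => (hG p i j t).hasDerivAt)
    (fun i j => (hG q i j t).hasDerivAt))
  have hrhs := (hg p q t).hasDerivAt.ofReal_comp.const_mul (2 : ℂ)
  simp only [hmetric] at hlhs
  exact hlhs.unique hrhs

theorem mul_sum_deriv_mul_eq_two_trace_sub {ι : Type*} [Fintype ι] [DecidableEq ι]
    {g h : ℝ → ι → ι → ℝ} (hg_symm : ∀ x p q, g x p q = g x q p)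
    (hg_diff : ∀ p q, Differentiable ℝ (fun x => g x p q))
    (hgh : ∀ x p q, ∑ r, g x p r * h x r q = if p = q then 1 else 0)
    {d D : ℝ → Fin 2 → Fin 2 → ℂ} (hd : ∀ x i j, d x i j = -d x j i)
    (hD : ∀ x i j, D x i j = -D x j i) {G S : ℝ → ι → Fin 2 → Fin 2 → ℂ}
    (hG_diff : ∀ p i j, Differentiable ℝ (fun x => G x p i j))
    (hS : ∀ x q s sb, S x q s sb = ∑ r, ∑ rb, ∑ p, G x p r rb * h x p q * d x r s * D x rb sb)
    (hquad : ∀ x p q, ∑ r, ∑ rb, G x p r rb * S x q r rb = 2 * if p = q then 1 else 0)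
    {t : ℝ} {Γ : ι → ι → ℝ}
    (hcompat : ∀ p q, ∑ a, g t p a * Γ a q + ∑ a, g t q a * Γ a p = deriv (fun x => g x p q) t)
    {c' : ℂ} (hc : HasDerivAt (fun x => d x 0 1 * D x 0 1) c' t) :
    d t 0 1 * D t 0 1 * ∑ i, ∑ sb, ∑ q, deriv (fun x => G x q i sb) t * S t q i sb
      = 2 * (d t 0 1 * D t 0 1) * ∑ p, (Γ p p : ℂ) - Fintype.card ι * c' := by
  have hgh' : ∀ x, (of fun p q => (g x p q : ℂ)) * (of fun p q => (h x p q : ℂ)) = 1 := by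
    intro x; ext p q
    simpa [mul_apply, one_apply, apply_ite ((↑) : ℝ → ℂ)] using congrArg ((↑) : ℝ → ℂ) (hgh x p q)
  have hg_symm' : (of fun p q => (g t p q : ℂ))ᵀ = of fun p q => (g t p q : ℂ) := by
    ext p q; simp [hg_symm]
  have hmetric : ∀ x p q, d x 0 1 * D x 0 1 * detPolar (G x p) (G x q) = 2 * g x p q :=
    fun x => mul_detPolar_eq_metric (hgh' x) (hd x) (hD x) (hS x) (hquad x)
  have hU := sq_mul_sum_detPolar_eq (hgh' t) hg_symm' (hmetric t)
    (g' := of fun p q => ((deriv (fun x => g x p q) t : ℝ) : ℂ))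
    (deriv_metric_eq_of_mul_detPolar hmetric hc hG_diff hg_diff)
  have hΓ := trace_mul_eq_two_trace_of_compat (hgh' t) hg_symm'
    (Γ := of fun p q => (Γ p q : ℂ)) (g' := of fun p q => ((deriv (fun x => g x p q) t : ℝ) : ℂ))
    (by ext p q; simpa [mul_apply, mul_comm] using congrArg ((↑) : ℝ → ℂ) (hcompat p q))
  simp only [of_apply] at hU
  rw [sum_sum_sum_mul_eq_detPolar (hd t) (hD t) (hS t), ← mul_assoc, ← sq, hU, hΓ]
  simp only [trace, Matrix.diag_apply, of_apply]
  ring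

theorem spinor_connection_metric_concordance_general
    (g h : ℝ → Fin 4 → Fin 4 → ℝ)
    (hg_symm : ∀ t i j, g t i j = g t j i)
    (hg_diff : ∀ i j, Differentiable ℝ (fun t => g t i j))
    (hgh : ∀ t p q, ∑ r : Fin 4, g t p r * h t r q = if p = q then (1 : ℝ) else 0)
    (d e : ℝ → Fin 2 → Fin 2 → ℂ)
    (hd_diff : ∀ i j, Differentiable ℝ (fun t => d t i j))
    (hd_skew : ∀ t i j, d t i j = - d t j i)
    (hde : ∀ t j i, ∑ r : Fin 2, d t j r * e t r i = if j = i then (1 : ℂ) else 0)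
    (G : ℝ → Fin 4 → Fin 2 → Fin 2 → ℂ)
    (hG_diff : ∀ p i j, Differentiable ℝ (fun t => G t p i j))
    (S : ℝ → Fin 4 → Fin 2 → Fin 2 → ℂ)
    (hS : ∀ t q s sb, S t q s sb
      = ∑ r : Fin 2, ∑ rb : Fin 2, ∑ p : Fin 4,
          G t p r rb * (h t p q : ℂ) * d t r s * star (d t rb sb))
    (hquad1 : ∀ t p q, ∑ r : Fin 2, ∑ rb : Fin 2, G t p r rb * S t q r rb
      = 2 * (if p = q then (1 : ℂ) else 0))
    (Γ : ℝ → Fin 4 → Fin 4 → ℝ)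
    (hΓ_compat : ∀ t p q,
      (∑ a : Fin 4, g t p a * Γ t a q) + (∑ a : Fin 4, g t q a * Γ t a p)
        = deriv (fun x => g x p q) t)
    (A : ℝ → Fin 2 → Fin 2 → ℂ)
    (hA : ∀ t i j, A t i j
      = (1 / 4) * (∑ sb : Fin 2, ∑ p : Fin 4, ∑ q : Fin 4,
            G t p i sb * (Γ t p q : ℂ) * S t q j sb)
        - (1 / 4) * (∑ sb : Fin 2, ∑ q : Fin 4,
            deriv (fun x => G x q i sb) t * S t q j sb)
        - (1 / 4) * (∑ ib : Fin 2, ∑ jb : Fin 2,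
            deriv (fun x => star (d x jb ib)) t * star (e t ib jb))
          * (if i = j then (1 : ℂ) else 0))
    : ∀ (i j : Fin 2) (t : ℝ),
      deriv (fun x => d x i j) t
        - (∑ k : Fin 2, A t k i * d t k j)
        - (∑ k : Fin 2, A t k j * d t i k) = 0 := by
  intro i j t
  set D : ℝ → Fin 2 → Fin 2 → ℂ := fun x r s => star (d x r s)
  have hD_skew : ∀ x r s, D x r s = -D x s r := fun x r s => by simp [D, hd_skew x r s]
  have hDE : ∀ j i, ∑ r, D t j r * star (e t r i) = if j = i then 1 else 0 := fun j i => by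
    simpa [D, apply_ite star] using congrArg star (hde t j i)
  have ha := skew_fin_two_zero_one_ne_zero (hd_skew t) (hde t)
  have hb : D t 0 1 ≠ 0 := star_ne_zero.mpr ha
  have hΓ_term := sum_sum_mul_mul_eq_two_trace (fun p q => (Γ t p q : ℂ)) (hquad1 t)
  have hdG_term := mul_sum_deriv_mul_eq_two_trace_sub hg_symm hg_diff hgh hd_skew hD_skew hG_diff hS hquad1
    (hΓ_compat t) ((hd_diff 0 1 t).hasDerivAt.fun_mul (hd_diff 0 1 t).star.hasDerivAt)
  have hd_term := mul_sum_deriv_mul_inv_eq hD_skew hDE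
  refine sub_sum_mul_sub_sum_mul_eq_zero (hd_skew t) (deriv_skew hd_skew t) ?_ i j
  rw [hA, hA]
  rw [Fin.sum_univ_two] at hΓ_term hdG_term
  simp only [D, if_true, mul_one, Fintype.card_fin, Nat.cast_ofNat] at hd_term hdG_term ⊢
  apply mul_left_cancel₀ (mul_ne_zero ha (pow_ne_zero 2 hb))
  set c := d t 0 1 * D t 0 1
  linear_combination (-(c^2)/4) * hΓ_term + (c/4) * hdG_term + (d t 0 1 ^ 2 * D t 0 1 / 2) * hd_term

/-- The spinor connection coefficients `A^i_j` given by the explicit formula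
satisfy the spinor-metric concordance condition `∇d = 0` along the given
frame direction:
`(d_{i,j})' - Σ_k A^k_i d_{k,j} - Σ_k A^k_j d_{i,k} = 0`. -/
theorem spinor_connection_metric_concordance
    (g h : ℝ → Fin 4 → Fin 4 → ℝ)
    (hg_symm : ∀ t i j, g t i j = g t j i)
    (hg_diff : ∀ i j, Differentiable ℝ (fun t => g t i j))
    (hgh : ∀ t p q, ∑ r : Fin 4, g t p r * h t r q = if p = q then (1 : ℝ) else 0)
    (d e : ℝ → Fin 2 → Fin 2 → ℂ)
    (hd_diff : ∀ i j, Differentiable ℝ (fun t => d t i j))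
    (hd_skew : ∀ t i j, d t i j = - d t j i)
    (hde : ∀ t j i, ∑ r : Fin 2, d t j r * e t r i = if j = i then (1 : ℂ) else 0)
    (G : ℝ → Fin 4 → Fin 2 → Fin 2 → ℂ)
    (hG_diff : ∀ p i j, Differentiable ℝ (fun t => G t p i j))
    (S : ℝ → Fin 4 → Fin 2 → Fin 2 → ℂ)
    (hS : ∀ t q s sb, S t q s sb
      = ∑ r : Fin 2, ∑ rb : Fin 2, ∑ p : Fin 4,
          G t p r rb * (h t p q : ℂ) * d t r s * star (d t rb sb))
    (hquad1 : ∀ t p q, ∑ r : Fin 2, ∑ rb : Fin 2, G t p r rb * S t q r rb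
      = 2 * (if p = q then (1 : ℂ) else 0))
    (hquad2 : ∀ t (r rb s sb : Fin 2), ∑ q : Fin 4, G t q r rb * S t q s sb
      = 2 * (if r = s then (1 : ℂ) else 0) * (if rb = sb then (1 : ℂ) else 0))
    (Γ : ℝ → Fin 4 → Fin 4 → ℝ)
    (hΓ_compat : ∀ t p q,
      (∑ a : Fin 4, g t p a * Γ t a q) + (∑ a : Fin 4, g t q a * Γ t a p)
        = deriv (fun x => g x p q) t)
    (A : ℝ → Fin 2 → Fin 2 → ℂ)
    (hA : ∀ t i j, A t i j
      = (1 / 4) * (∑ sb : Fin 2, ∑ p : Fin 4, ∑ q : Fin 4,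
            G t p i sb * (Γ t p q : ℂ) * S t q j sb)
        - (1 / 4) * (∑ sb : Fin 2, ∑ q : Fin 4,
            deriv (fun x => G x q i sb) t * S t q j sb)
        - (1 / 4) * (∑ ib : Fin 2, ∑ jb : Fin 2,
            deriv (fun x => star (d x jb ib)) t * star (e t ib jb))
          * (if i = j then (1 : ℂ) else 0))
    : ∀ (i j : Fin 2) (t : ℝ),
      deriv (fun x => d x i j) t
        - (∑ k : Fin 2, A t k i * d t k j)
        - (∑ k : Fin 2, A t k j * d t i k) = 0 :=
  spinor_connection_metric_concordance_general g h hg_symm hg_diff hgh d e hd_diff hd_skew hde G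
    hG_diff S hS hquad1 Γ hΓ_compat A hA
end

section
/- The spinor connection coefficients A and conjugate coefficients B defined by the explicit formulas satisfy the Infeld–van der Waerden concordance condition (∇G = 0 in the given frame direction): for all p ∈ {0,1,2,3}, all i, ī ∈ {1,2} and all t ∈ ℝ, ((G_p)_{i,ī})' + Σ_{k=1}^{2} A^i_k (G_p)_{k,ī} + Σ_{k̄=1}^{2} B^ī_{k̄} (G_p)_{i,k̄} − Σ_{k=0}^{3} Γ^k_p (G_k)_{i,ī} = 0. -/
/-!
Write `∇G_q = G_q' - Γ^b_q G_b`. The completeness identity expands every 2 × 2 matrix in the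
basis `G_m`, so `∇G_q = c_q^m G_m` with `c_q^m = ½ ⟨∇G_q, S^m⟩`. Since `d` is a skew 2 × 2
matrix, `d' = (τ/2) d` with `τ = tr (d' e)`; differentiating `⟨G_p, dᵀ G_a d̄⟩ = 2 g_pa` and using
metric compatibility of `Γ` shows that the lowered coefficients `c_qa = c_q^m g_ma` satisfy
`c_qa + c_aq = -Re τ · g_qa`, hence `tr c = -2 Re τ`. The symmetric quadratic identity rewrites
`G_m S^qᵀ G_p + G_p S^qᵀ G_m` through Kronecker deltas and `g_mp h^{aq} G_a`, which gives
`∑_q (∇G_q S^qᵀ G_p + G_p S^qᵀ ∇G_q) = 4 ∇G_p - 2 Re τ · G_p`. As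
`A = -¼ ∑_q ∇G_q S^qᵀ - τ̄/4` and `Bᵀ = -¼ ∑_q S^qᵀ ∇G_q - τ/4`, this is the concordance condition.
-/

open Finset Matrix

namespace IvdW

theorem eq_trace_mul_div_two_smul_of_transpose_eq_neg {K : Type*} [Field K] [CharZero K]
    {X d e : Matrix (Fin 2) (Fin 2) K} (hX : Xᵀ = -X) (hd : dᵀ = -d) (hde : d * e = 1) :
    X = ((X * e).trace / 2) • d := by
  have skew : ∀ {M : Matrix (Fin 2) (Fin 2) K}, Mᵀ = -M →
      M 0 0 = 0 ∧ M 1 1 = 0 ∧ M 1 0 = -M 0 1 := fun {M} hM => by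
    have h := fun i j => congrFun (congrFun hM i) j
    simp only [transpose_apply, Matrix.neg_apply] at h
    exact ⟨by linear_combination h 0 0 / 2, by linear_combination h 1 1 / 2, h 0 1⟩
  obtain ⟨x00, x11, x10⟩ := skew hX
  obtain ⟨d00, d11, d10⟩ := skew hd
  have h00 := congrFun (congrFun hde 0) 0
  have h11 := congrFun (congrFun hde 1) 1
  simp only [mul_apply, Fin.sum_univ_two, one_apply_eq, d00, d11, d10] at h00 h11
  ext i j
  fin_cases i <;> fin_cases j <;>
    simp only [Fin.zero_eta, Fin.mk_one, Fin.isValue, trace, diag_apply, mul_apply,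
      Fin.sum_univ_two, Matrix.smul_apply, smul_eq_mul, x00, x11, x10, d00, d11, d10, zero_mul,
      zero_add, add_zero, mul_zero, neg_mul, mul_neg, neg_inj]
  all_goals linear_combination (-X 0 1 / 2) * (h00 + h11)

section EntrywiseDeriv

variable {𝕜 𝔸 : Type*} [NontriviallyNormedField 𝕜] [NormedRing 𝔸] [NormedAlgebra 𝕜 𝔸]
  {l m n : Type*} [Fintype m] {x : 𝕜}

theorem hasDerivAt_matrix_mul_apply {A : 𝕜 → Matrix l m 𝔸} {B : 𝕜 → Matrix m n 𝔸}
    {A' : Matrix l m 𝔸} {B' : Matrix m n 𝔸}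
    (hA : ∀ i j, HasDerivAt (fun y => A y i j) (A' i j) x)
    (hB : ∀ i j, HasDerivAt (fun y => B y i j) (B' i j) x) (i : l) (k : n) :
    HasDerivAt (fun y => (A y * B y) i k) ((A' * B x + A x * B') i k) x := by
  simp only [mul_apply, Matrix.add_apply, ← sum_add_distrib]
  exact HasDerivAt.fun_sum fun j _ => (hA i j).fun_mul (hB j k)

theorem hasDerivAt_matrix_trace {M : 𝕜 → Matrix m m 𝔸} {M' : Matrix m m 𝔸}
    (hM : ∀ i j, HasDerivAt (fun y => M y i j) (M' i j) x) :
    HasDerivAt (fun y => (M y).trace) M'.trace x :=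
  HasDerivAt.fun_sum fun i _ => hM i i

end EntrywiseDeriv

-- With `P = dᵀ`, `P * X * Pᴴ` is the matrix `dᵀ X d̄`: both spinor indices of `X` lowered by `d`.
theorem trace_transpose_mul_mul_mul_conjTranspose_comm {n R : Type*} [Fintype n] [CommRing R]
    [StarRing R] {P : Matrix n n R} (hP : Pᵀ = -P) (X Y : Matrix n n R) :
    (Xᵀ * (P * Y * Pᴴ)).trace = (Yᵀ * (P * X * Pᴴ)).trace := by
  symm
  calc (Yᵀ * (P * X * Pᴴ)).trace = (Pᴴᵀ * Xᵀ * Pᵀ * Y).trace := by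
        rw [← trace_transpose]; simp only [transpose_mul, transpose_transpose, Matrix.mul_assoc]
    _ = (Pᴴ * (Xᵀ * P * Y)).trace := by
        rw [← conjTranspose_transpose_eq_transpose_conjTranspose, hP, conjTranspose_neg]
        simp only [Matrix.neg_mul, Matrix.mul_neg, neg_neg, Matrix.mul_assoc]
    _ = (Xᵀ * (P * Y * Pᴴ)).trace := by rw [trace_mul_comm]; simp only [Matrix.mul_assoc]

section Congruence

variable {ι n : Type*} [Fintype n] {x : ℝ} {μ : ℂ} {P : ℝ → Matrix n n ℂ}

theorem hasDerivAt_mul_mul_conjTranspose_apply {Y : ℝ → Matrix n n ℂ} {Y' : Matrix n n ℂ}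
    (hP : ∀ i j, HasDerivAt (fun y => P y i j) (μ * P x i j) x)
    (hY : ∀ i j, HasDerivAt (fun y => Y y i j) (Y' i j) x) (i j : n) :
    HasDerivAt (fun y => (P y * Y y * (P y)ᴴ) i j)
      ((P x * Y' * (P x)ᴴ + (μ + star μ) • (P x * Y x * (P x)ᴴ)) i j) x := by
  have hPH : ∀ i j, HasDerivAt (fun y => (P y)ᴴ i j) ((μ • P x)ᴴ i j) x := fun i j => by
    simpa [conjTranspose_apply] using (hP j i).star
  refine (hasDerivAt_matrix_mul_apply (hasDerivAt_matrix_mul_apply (A' := μ • P x)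
    (fun i j => by simpa using hP i j) hY) hPH i j).congr_deriv
    (congrFun (congrFun ?_ i) j)
  rw [conjTranspose_smul, Matrix.add_mul, smul_mul_assoc, smul_mul_assoc, Matrix.mul_smul,
    add_smul]
  abel

theorem hasDerivAt_trace_transpose_mul_mul_mul_conjTranspose {X Y : ℝ → Matrix n n ℂ}
    {X' Y' : Matrix n n ℂ} (hX : ∀ i j, HasDerivAt (fun y => X y i j) (X' i j) x)
    (hP : ∀ i j, HasDerivAt (fun y => P y i j) (μ * P x i j) x)
    (hY : ∀ i j, HasDerivAt (fun y => Y y i j) (Y' i j) x) :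
    HasDerivAt (fun y => ((X y)ᵀ * (P y * Y y * (P y)ᴴ)).trace)
      ((X'ᵀ * (P x * Y x * (P x)ᴴ)).trace + ((X x)ᵀ * (P x * Y' * (P x)ᴴ)).trace
        + (μ + star μ) * ((X x)ᵀ * (P x * Y x * (P x)ᴴ)).trace) x := by
  refine (hasDerivAt_matrix_trace (hasDerivAt_matrix_mul_apply (A := fun y => (X y)ᵀ)
    (A' := X'ᵀ) (fun i j => hX j i) (hasDerivAt_mul_mul_conjTranspose_apply hP hY))).congr_deriv ?_
  simp only [Matrix.mul_add, trace_add, Matrix.mul_smul, trace_smul, smul_eq_mul, add_assoc]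

theorem trace_transpose_deriv_mul_add_eq_of_pairing {G : ℝ → ι → Matrix n n ℂ}
    {g : ℝ → Matrix ι ι ℂ} {G' : ι → Matrix n n ℂ} {g' : Matrix ι ι ℂ}
    (hpair : ∀ y p a, ((G y p)ᵀ * (P y * G y a * (P y)ᴴ)).trace = 2 * g y p a)
    (hG : ∀ p i j, HasDerivAt (fun y => G y p i j) (G' p i j) x)
    (hg : ∀ p a, HasDerivAt (fun y => g y p a) (g' p a) x)
    (hP : ∀ i j, HasDerivAt (fun y => P y i j) (μ * P x i j) x) (hPskew : (P x)ᵀ = -P x)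
    (p a : ι) :
    ((G' p)ᵀ * (P x * G x a * (P x)ᴴ)).trace + ((G' a)ᵀ * (P x * G x p * (P x)ᴴ)).trace
      = 2 * g' p a - (μ + star μ) * (2 * g x p a) := by
  have hform := hasDerivAt_trace_transpose_mul_mul_mul_conjTranspose (hG p) hP (hG a)
  have hmetric : HasDerivAt (fun y => ((G y p)ᵀ * (P y * G y a * (P y)ᴴ)).trace)
      (2 * g' p a) x :=
    ((hg p a).const_mul 2).congr_of_eventuallyEq (Filter.Eventually.of_forall (hpair · p a))
  rw [← hform.unique hmetric, trace_transpose_mul_mul_mul_conjTranspose_comm hPskew (G x p),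
    hpair]
  ring

end Congruence

theorem mul_eq_one_of_sum_mul_eq {ι R : Type*} [Fintype ι] [DecidableEq ι] [Semiring R]
    {A B : Matrix ι ι R} (h : ∀ i j, ∑ r, A i r * B r j = if i = j then 1 else 0) : A * B = 1 := by
  ext i j; simpa [mul_apply, one_apply] using h i j

section Metric

variable {ι R : Type*} [Fintype ι] [DecidableEq ι] [CommRing R] {c g h : Matrix ι ι R} {ρ : R}

theorem sum_smul_eq_of_eq_sum_smul {M : Type*} [AddCommGroup M] [Module R M] {S σ : ι → M}
    (hgh : g * h = 1) (hS : ∀ q, S q = ∑ p, h p q • σ p) (a : ι) : ∑ q, g q a • S q = σ a := by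
  have hhg : ∀ p, ∑ q, g q a * h p q = (1 : Matrix ι ι R) p a := fun p => by
    rw [← mul_eq_one_comm.mp hgh, mul_apply]; exact sum_congr rfl fun _ _ => mul_comm _ _
  simp only [hS, smul_sum, smul_smul]
  rw [sum_comm]
  simp only [← sum_smul, hhg, one_apply, ite_smul, one_smul, zero_smul, sum_ite_eq', mem_univ,
    if_true]

theorem mul_mul_eq_neg_smul_one_sub_transpose (hg : gᵀ = g) (hgh : g * h = 1)
    (hc : c * g + (c * g)ᵀ = -ρ • g) : h * c * g = -ρ • 1 - cᵀ := by
  have hhg : h * g = 1 := mul_eq_one_comm.mp hgh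
  rw [Matrix.mul_assoc, eq_sub_of_add_eq hc, Matrix.mul_sub, Matrix.mul_smul, hhg,
    transpose_mul, hg, ← Matrix.mul_assoc, hhg, Matrix.one_mul]

theorem two_mul_trace_eq_neg_card_mul (hg : gᵀ = g) (hgh : g * h = 1)
    (hc : c * g + (c * g)ᵀ = -ρ • g) : 2 * c.trace = -(Fintype.card ι * ρ) := by
  have := congrArg trace (mul_mul_eq_neg_smul_one_sub_transpose hg hgh hc)
  rw [Matrix.mul_assoc, trace_mul_comm, Matrix.mul_assoc, hgh, Matrix.mul_one, trace_sub,
    trace_smul, trace_one, trace_transpose, smul_eq_mul] at this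
  linear_combination this

end Metric

section Spinor

variable {ι n R : Type*} [Fintype n] [CommRing R] {G S : ι → Matrix n n R} {g h : Matrix ι ι R}

theorem trace_transpose_mul_eq_sum (X Y : Matrix n n R) :
    (Xᵀ * Y).trace = ∑ i, ∑ j, X i j * Y i j := by
  rw [trace]; simp only [diag_apply, mul_apply, transpose_apply]; exact sum_comm

theorem trace_transpose_mul_sum_smul {κ : Type*} (X : Matrix n n R) (s : Finset κ) (a : κ → R)
    (Y : κ → Matrix n n R) :
    (Xᵀ * ∑ k ∈ s, a k • Y k).trace = ∑ k ∈ s, a k * (Xᵀ * Y k).trace := by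
  simp only [Matrix.mul_sum, trace_sum, Matrix.mul_smul, trace_smul, smul_eq_mul]

theorem trace_transpose_mul_eq_two_mul [Fintype ι] [DecidableEq ι] {σ : ι → Matrix n n R}
    (hdual : ∀ p q, ((G p)ᵀ * S q).trace = 2 * if p = q then 1 else 0)
    (hσ : ∀ a, ∑ q, g q a • S q = σ a) (p a : ι) : ((G p)ᵀ * σ a).trace = 2 * g p a := by
  simp only [← hσ, trace_transpose_mul_sum_smul, hdual, mul_ite, mul_one, mul_zero, sum_ite_eq,
    mem_univ, if_true]
  ring

theorem sum_trace_transpose_mul_smul [Fintype ι] [DecidableEq n]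
    (hcompl : ∀ r rb s sb, ∑ q, G q r rb * S q s sb
      = 2 * (if r = s then 1 else 0) * (if rb = sb then 1 else 0)) (X : Matrix n n R) :
    ∑ m, (Xᵀ * S m).trace • G m = (2 : R) • X := by
  ext x y
  calc (∑ m, (Xᵀ * S m).trace • G m) x y
      = ∑ i, ∑ j, X i j * ∑ m, G m x y * S m i j := by
        simp only [trace_transpose_mul_eq_sum, Matrix.sum_apply, Matrix.smul_apply, smul_eq_mul,
          sum_mul, mul_sum]
        rw [sum_comm]
        refine sum_congr rfl fun i _ => ?_
        rw [sum_comm]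
        exact sum_congr rfl fun j _ => sum_congr rfl fun m _ => by ring
    _ = ((2 : R) • X) x y := by
        simp only [hcompl, mul_ite, mul_one, mul_zero, sum_ite_eq, mem_univ, if_true,
          Matrix.smul_apply, smul_eq_mul]
        ring

theorem eq_sum_trace_div_two_smul [Fintype ι] [DecidableEq n] {K : Type*} [Field K]
    [CharZero K] {G S : ι → Matrix n n K}
    (hcompl : ∀ r rb s sb, ∑ q, G q r rb * S q s sb
      = 2 * (if r = s then 1 else 0) * (if rb = sb then 1 else 0)) (X : Matrix n n K) :
    X = ∑ m, ((Xᵀ * S m).trace / 2) • G m := by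
  simp_rw [div_eq_inv_mul, ← smul_smul, ← smul_sum, sum_trace_transpose_mul_smul hcompl,
    smul_smul, inv_mul_cancel₀ (two_ne_zero' K), one_smul]

theorem mul_transpose_mul_add_mul_transpose_mul [StarRing R] {e : Matrix n n R}
    (hsym : ∀ p q r u rb ub, G p r ub * G q u rb + G q r ub * G p u rb
      = G p r rb * G q u ub + G q r rb * G p u ub - 2 * e r u * star (e rb ub) * g p q)
    (m p : ι) (Y : Matrix n n R) :
    G m * Yᵀ * G p + G p * Yᵀ * G m
      = ((G p)ᵀ * Y).trace • G m + ((G m)ᵀ * Y).trace • G p - (2 * g m p) • (e * Y * eᴴ) := by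
  ext i ib
  calc (G m * Yᵀ * G p + G p * Yᵀ * G m) i ib
      = ∑ k, ∑ sb, Y k sb * (G m i sb * G p k ib + G p i sb * G m k ib) := by
        simp only [Matrix.add_apply, mul_apply, transpose_apply, sum_mul, ← sum_add_distrib]
        exact sum_congr rfl fun k _ => sum_congr rfl fun sb _ => by ring
    _ = ∑ k, ∑ sb, Y k sb * (G m i ib * G p k sb + G p i ib * G m k sb
          - 2 * e i k * star (e ib sb) * g m p) :=
        sum_congr rfl fun k _ => sum_congr rfl fun sb _ => by rw [hsym]
    _ = _ := by
        simp only [trace_transpose_mul_eq_sum, Matrix.add_apply, Matrix.sub_apply,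
          Matrix.smul_apply, smul_eq_mul, mul_apply, conjTranspose_apply, sum_mul, mul_sum,
          mul_sub, mul_add, sum_add_distrib, sum_sub_distrib]
        rw [sum_comm (f := fun sb k => 2 * g m p * (e i k * Y k sb * star (e ib sb)))]
        refine congrArg₂ (· - ·) (congrArg₂ (· + ·) ?_ ?_) ?_ <;>
          exact sum_congr rfl fun _ _ => sum_congr rfl fun _ _ => by ring

theorem mul_mul_conjTranspose_eq_sum [Fintype ι] [DecidableEq n] [StarRing R] {d e : Matrix n n R}
    (hd : dᵀ = -d) (hde : d * e = 1) (hS : ∀ q, S q = ∑ p, h p q • (dᵀ * G p * dᵀᴴ)) (q : ι) :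
    e * S q * eᴴ = ∑ a, h a q • G a := by
  have hed : e * dᵀ = -1 := by rw [hd, Matrix.mul_neg, mul_eq_one_comm.mp hde]
  have hcancel : ∀ X : Matrix n n R, e * (dᵀ * X * dᵀᴴ) * eᴴ = X := fun X => by
    calc e * (dᵀ * X * dᵀᴴ) * eᴴ = e * dᵀ * X * (e * dᵀ)ᴴ := by
          simp only [conjTranspose_mul, Matrix.mul_assoc]
      _ = X := by simp [hed]
  simp only [hS, Matrix.mul_sum, Matrix.sum_mul, Matrix.mul_smul, Matrix.smul_mul, hcancel]

theorem trace_transpose_mul_add_eq_of_compat [Fintype ι] {G' D σ : ι → Matrix n n R}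
    {g' Γ : Matrix ι ι R} {ρ : R} (hg : gᵀ = g) (hpair : ∀ p a, ((G p)ᵀ * σ a).trace = 2 * g p a)
    (hderiv : ∀ p a, ((G' p)ᵀ * σ a).trace + ((G' a)ᵀ * σ p).trace
      = 2 * g' p a - ρ * (2 * g p a))
    (hcompat : ∀ p q, ∑ b, g p b * Γ b q + ∑ b, g q b * Γ b p = g' p q)
    (hD : ∀ q, D q = G' q - ∑ b, Γ b q • G b) (q a : ι) :
    ((D q)ᵀ * σ a).trace + ((D a)ᵀ * σ q).trace = -ρ * (2 * g q a) := by
  have hlower : ∀ q a, ((D q)ᵀ * σ a).trace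
      = ((G' q)ᵀ * σ a).trace - 2 * ∑ b, g a b * Γ b q := fun q a => by
    simp only [hD, transpose_sub, transpose_sum, transpose_smul, Matrix.sub_mul, Matrix.sum_mul,
      Matrix.smul_mul, trace_sub, trace_sum, trace_smul, hpair, smul_eq_mul, mul_sum]
    congr 1
    exact sum_congr rfl fun b _ => by rw [← transpose_apply g, hg]; ring
  rw [hlower, hlower]
  linear_combination hderiv q a - 2 * hcompat q a

theorem mul_add_transpose_eq_neg_smul [Fintype ι] {K : Type*} [Field K] [CharZero K]
    {S D σ : ι → Matrix n n K} {c g : Matrix ι ι K} {ρ : K}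
    (hσ : ∀ a, ∑ m, g m a • S m = σ a) (hc : ∀ q m, c q m = ((D q)ᵀ * S m).trace / 2)
    (hskew : ∀ q a, ((D q)ᵀ * σ a).trace + ((D a)ᵀ * σ q).trace = -ρ * (2 * g q a)) :
    c * g + (c * g)ᵀ = -ρ • g := by
  have hcg : ∀ q a, (c * g) q a = ((D q)ᵀ * σ a).trace / 2 := fun q a => by
    simp only [mul_apply, hc, ← hσ, Matrix.mul_sum, trace_sum, Matrix.mul_smul, trace_smul,
      smul_eq_mul, sum_div]
    exact sum_congr rfl fun m _ => by ring
  ext q a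
  simp only [Matrix.add_apply, transpose_apply, hcg, Matrix.smul_apply, smul_eq_mul]
  linear_combination hskew q a / 2

theorem sum_mul_transpose_mul_add_eq [Fintype ι] [DecidableEq ι] [StarRing R]
    {e : Matrix n n R} {D : ι → Matrix n n R} {c : Matrix ι ι R} {ρ : R}
    (hsym : ∀ p q r u rb ub, G p r ub * G q u rb + G q r ub * G p u rb
      = G p r rb * G q u ub + G q r rb * G p u ub - 2 * e r u * star (e rb ub) * g p q)
    (hdual : ∀ p q, ((G p)ᵀ * S q).trace = 2 * if p = q then 1 else 0)
    (heSe : ∀ q, e * S q * eᴴ = ∑ a, h a q • G a)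
    (hD : ∀ q, D q = ∑ m, c q m • G m) (hg : gᵀ = g) (hgh : g * h = 1)
    (hc : c * g + (c * g)ᵀ = -ρ • g) (p : ι) :
    ∑ q, (D q * (S q)ᵀ * G p + G p * (S q)ᵀ * D q)
      = (4 : R) • D p + ((2 - Fintype.card ι) * ρ) • G p := by
  have expand : ∑ q, (D q * (S q)ᵀ * G p + G p * (S q)ᵀ * D q)
      = ∑ q, ∑ m, c q m • (G m * (S q)ᵀ * G p + G p * (S q)ᵀ * G m) := by
    simp only [hD, Matrix.sum_mul, Matrix.mul_sum, Matrix.smul_mul, Matrix.mul_smul, smul_add,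
      sum_add_distrib]
  have hδp : ∑ q, ∑ m, (c q m * (2 * if p = q then (1 : R) else 0)) • G m
      = (2 : R) • D p := by
    rw [sum_comm]
    simp only [mul_ite, mul_one, mul_zero, ite_smul, zero_smul, sum_ite_eq, mem_univ, if_true,
      hD, smul_sum, smul_smul]
    simp only [mul_comm]
  have htr : ∑ q, ∑ m, (c q m * (2 * if m = q then (1 : R) else 0)) • G p
      = (2 * c.trace) • G p := by
    simp only [mul_ite, mul_one, mul_zero, ite_smul, zero_smul, sum_ite_eq', mem_univ, if_true,
      ← sum_smul, trace, diag_apply, mul_sum]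
    simp only [mul_comm]
  have hmetric : ∑ q, ∑ m, (c q m * (2 * g m p)) • ∑ a, h a q • G a
      = (2 : R) • ∑ a, (h * c * g) a p • G a := by
    simp_rw [← sum_smul, smul_sum, smul_smul]
    rw [sum_comm]
    refine sum_congr rfl fun a _ => ?_
    rw [← sum_smul]
    congr 1
    simp only [mul_apply, mul_sum, sum_mul]
    rw [sum_comm]
    exact sum_congr rfl fun m _ => sum_congr rfl fun q _ => by ring
  have hhcg : ∑ a, (h * c * g) a p • G a = -ρ • G p - D p := by
    simp only [mul_mul_eq_neg_smul_one_sub_transpose hg hgh hc, Matrix.sub_apply,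
      Matrix.smul_apply, one_apply, transpose_apply, sub_smul, sum_sub_distrib, hD, smul_eq_mul,
      mul_ite, mul_one, mul_zero, ite_smul, zero_smul, sum_ite_eq', mem_univ, if_true]
  rw [expand]
  simp only [mul_transpose_mul_add_mul_transpose_mul hsym, hdual, heSe, smul_sub, smul_add,
    sum_sub_distrib, sum_add_distrib, smul_smul]
  rw [hδp, htr, hmetric, hhcg, two_mul_trace_eq_neg_card_mul hg hgh hc]
  module

theorem add_mul_add_mul_transpose_eq_zero [Fintype ι] [DecidableEq n] {D G S : ι → Matrix n n ℂ}
    {A B : Matrix n n ℂ} {μ : ℂ} (hcard : Fintype.card ι = 4) (p : ι)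
    (hsum : ∑ q, (D q * (S q)ᵀ * G p + G p * (S q)ᵀ * D q)
      = (4 : ℂ) • D p + ((2 - Fintype.card ι) * (μ + star μ)) • G p)
    (hA : A = -(1 / 4 : ℂ) • ∑ q, D q * (S q)ᵀ - (star μ / 2) • 1)
    (hB : B = -(1 / 4 : ℂ) • ∑ q, (D q)ᵀ * S q - (μ / 2) • 1) :
    D p + A * G p + G p * Bᵀ = 0 := by
  rw [sum_add_distrib, hcard, Nat.cast_ofNat] at hsum
  rw [hA, hB]
  simp only [Matrix.sub_mul, Matrix.smul_mul, Matrix.sum_mul, transpose_sub, transpose_smul,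
    transpose_sum, transpose_mul, transpose_transpose, transpose_one, Matrix.mul_sub,
    Matrix.mul_smul, Matrix.mul_sum, Matrix.one_mul, Matrix.mul_one, ← Matrix.mul_assoc]
  linear_combination (norm := module) (-1 / 4 : ℂ) • hsum

end Spinor

section Frame

variable {ι n : Type*} [Fintype ι] [Fintype n]

/-- `∇G_q` along the frame direction, with only the vector index of `G` transported by `Γ`. -/
noncomputable def covariantDeriv (G : ℝ → ι → Matrix n n ℂ) (Γ : ℝ → ι → ι → ℝ) (t : ℝ)
    (q : ι) : Matrix n n ℂ :=
  of (fun i j => deriv (fun y => G y q i j) t) - ∑ b, (Γ t b q : ℂ) • G t b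

theorem hasDerivAt_transpose_apply_eq_mul {d e : ℝ → Matrix (Fin 2) (Fin 2) ℂ}
    {d' : Matrix (Fin 2) (Fin 2) ℂ} {t : ℝ}
    (hd : ∀ i j, HasDerivAt (fun y => d y i j) (d' i j) t) (hskew : ∀ y, (d y)ᵀ = -d y)
    (hde : d t * e t = 1) (i j : Fin 2) :
    HasDerivAt (fun y => (d y)ᵀ i j) ((d' * e t).trace / 2 * (d t)ᵀ i j) t := by
  have hd'skew : d'ᵀ = -d' := by
    ext i j
    have hji : (fun y => d y j i) = fun y => -d y i j :=
      funext fun y => congrFun (congrFun (hskew y) i) j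
    exact (hd j i).unique (hji ▸ (hd i j).neg)
  exact (hd j i).congr_deriv (congrFun (congrFun
    (eq_trace_mul_div_two_smul_of_transpose_eq_neg hd'skew (hskew t) hde) j) i)

theorem map_ofReal_mul_map_ofReal_eq_one [DecidableEq ι] {g h : Matrix ι ι ℝ}
    (hgh : ∀ p q, ∑ r, g p r * h r q = if p = q then 1 else 0) :
    g.map ((↑) : ℝ → ℂ) * h.map (↑) = 1 := by
  change g.map Complex.ofRealHom * h.map Complex.ofRealHom = 1
  rw [← Matrix.map_mul, mul_eq_one_of_sum_mul_eq hgh, Matrix.map_one _ (map_zero _) (map_one _)]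

theorem eq_sum_smul_mul_mul_conjTranspose {G S : ι → Matrix n n ℂ} {h : Matrix ι ι ℝ}
    {d : Matrix n n ℂ}
    (hS : ∀ q s sb, S q s sb = ∑ r, ∑ rb, ∑ p, G p r rb * (h p q : ℂ) * d r s * star (d rb sb))
    (q : ι) : S q = ∑ p, (h p q : ℂ) • (dᵀ * G p * dᵀᴴ) := by
  ext s sb
  rw [hS]
  simp only [Matrix.sum_apply, Matrix.smul_apply, mul_apply, transpose_apply, conjTranspose_apply,
    smul_eq_mul, mul_sum, sum_mul]
  rw [sum_comm]
  refine (sum_congr rfl fun rb _ => sum_comm).trans (sum_comm.trans ?_)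
  exact sum_congr rfl fun p _ => sum_congr rfl fun rb _ => sum_congr rfl fun r _ => by ring

theorem eq_covariantDeriv_mul_transpose [DecidableEq n] {G : ℝ → ι → Matrix n n ℂ}
    {Γ : ℝ → ι → ι → ℝ} {S : ι → Matrix n n ℂ} {d : ℝ → Matrix n n ℂ} {e : Matrix n n ℂ}
    {t : ℝ} {A : Matrix n n ℂ}
    (hA : ∀ i j, A i j
      = (1 / 4) * (∑ sb, ∑ p, ∑ q, G t p i sb * (Γ t p q : ℂ) * S q j sb)
        - (1 / 4) * (∑ sb, ∑ q, deriv (fun x => G x q i sb) t * S q j sb)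
        - (1 / 4) * (∑ ib, ∑ jb, deriv (fun x => star (d x jb ib)) t * star (e ib jb))
          * (if i = j then (1 : ℂ) else 0)) :
    A = -(1 / 4 : ℂ) • ∑ q, covariantDeriv G Γ t q * (S q)ᵀ
      - (star ((of (fun i j => deriv (fun y => d y i j) t) * e).trace / 2) / 2) • 1 := by
  ext i j
  rw [hA]
  simp only [covariantDeriv, deriv.star, Matrix.sub_apply, Matrix.sum_apply, Matrix.smul_apply,
    mul_apply, transpose_apply, of_apply, one_apply, smul_eq_mul, sub_mul, sum_sub_distrib,
    sum_mul, trace, diag_apply, star_sum, star_mul', star_div₀, star_ofNat]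
  have hΓ : ∑ sb, ∑ p, ∑ q, G t p i sb * (Γ t p q : ℂ) * S q j sb
      = ∑ q, ∑ p, ∑ sb, (Γ t p q : ℂ) * G t p i sb * S q j sb := by
    rw [sum_comm]
    refine (sum_congr rfl fun p _ => sum_comm).trans (sum_comm.trans ?_)
    exact sum_congr rfl fun q _ => sum_congr rfl fun p _ => sum_congr rfl fun sb _ => by ring
  rw [hΓ, sum_comm (s := univ) (t := univ)
      (f := fun sb q => deriv (fun x => G x q i sb) t * S q j sb),
    sum_comm (f := fun ib jb => star (deriv (fun y => d y jb ib) t) * star (e ib jb))]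
  ring

theorem eq_transpose_covariantDeriv_mul [DecidableEq n] {G : ℝ → ι → Matrix n n ℂ}
    {Γ : ℝ → ι → ι → ℝ} {S : ι → Matrix n n ℂ} {d : ℝ → Matrix n n ℂ} {e : Matrix n n ℂ}
    {t : ℝ} {B : Matrix n n ℂ}
    (hB : ∀ ib kb, B ib kb
      = (1 / 4) * (∑ s, ∑ q, ∑ m, G t q s ib * (Γ t q m : ℂ) * S m s kb)
        - (1 / 4) * (∑ s, ∑ m, deriv (fun x => G x m s ib) t * S m s kb)
        - (1 / 4) * (∑ s, ∑ u, deriv (fun x => d x s u) t * e u s)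
          * (if ib = kb then (1 : ℂ) else 0)) :
    B = -(1 / 4 : ℂ) • ∑ q, (covariantDeriv G Γ t q)ᵀ * S q
      - ((of (fun i j => deriv (fun y => d y i j) t) * e).trace / 2 / 2) • 1 := by
  ext ib kb
  rw [hB]
  simp only [covariantDeriv, Matrix.sub_apply, Matrix.sum_apply, Matrix.smul_apply,
    mul_apply, transpose_apply, of_apply, one_apply, smul_eq_mul, sub_mul, sum_sub_distrib,
    sum_mul, trace, diag_apply]
  have hΓ : ∑ s, ∑ q, ∑ m, G t q s ib * (Γ t q m : ℂ) * S m s kb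
      = ∑ m, ∑ s, ∑ q, (Γ t q m : ℂ) * G t q s ib * S m s kb := by
    refine (sum_congr rfl fun s _ => sum_comm).trans (sum_comm.trans ?_)
    exact sum_congr rfl fun m _ => sum_congr rfl fun s _ => sum_congr rfl fun q _ => by ring
  rw [hΓ, sum_comm (s := univ) (t := univ)
    (f := fun s m => deriv (fun x => G x m s ib) t * S m s kb)]
  ring

theorem covariantDeriv_add_mul_add_mul_transpose_apply {G : ℝ → ι → Matrix n n ℂ}
    {Γ : ℝ → ι → ι → ℝ} {t : ℝ} {A B : Matrix n n ℂ} (p : ι) (i ib : n) :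
    (covariantDeriv G Γ t p + A * G t p + G t p * Bᵀ) i ib
      = deriv (fun x => G x p i ib) t + ∑ k, A i k * G t p k ib + ∑ kb, B ib kb * G t p i kb
        - ∑ k, (Γ t k p : ℂ) * G t k i ib := by
  simp only [covariantDeriv, Matrix.add_apply, Matrix.sub_apply, mul_apply, of_apply,
    transpose_apply, Matrix.sum_apply, Matrix.smul_apply, smul_eq_mul]
  simp only [mul_comm (G t p i _)]
  ring

end Frame

end IvdW

open IvdW

theorem spinor_connection_IvdW_concordance_general
    (g h : ℝ → Fin 4 → Fin 4 → ℝ)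
    (hg_symm : ∀ t i j, g t i j = g t j i)
    (hg_diff : ∀ i j, Differentiable ℝ (fun t => g t i j))
    (hgh : ∀ t p q, ∑ r : Fin 4, g t p r * h t r q = if p = q then (1 : ℝ) else 0)
    (d e : ℝ → Fin 2 → Fin 2 → ℂ)
    (hd_diff : ∀ i j, Differentiable ℝ (fun t => d t i j))
    (hd_skew : ∀ t i j, d t i j = - d t j i)
    (hde : ∀ t j i, ∑ r : Fin 2, d t j r * e t r i = if j = i then (1 : ℂ) else 0)
    (G : ℝ → Fin 4 → Fin 2 → Fin 2 → ℂ)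
    (hG_diff : ∀ p i j, Differentiable ℝ (fun t => G t p i j))
    (S : ℝ → Fin 4 → Fin 2 → Fin 2 → ℂ)
    (hS : ∀ t q s sb, S t q s sb
      = ∑ r : Fin 2, ∑ rb : Fin 2, ∑ p : Fin 4,
          G t p r rb * (h t p q : ℂ) * d t r s * star (d t rb sb))
    (hquad1 : ∀ t p q, ∑ r : Fin 2, ∑ rb : Fin 2, G t p r rb * S t q r rb
      = 2 * (if p = q then (1 : ℂ) else 0))
    (hquad2 : ∀ t (r rb s sb : Fin 2), ∑ q : Fin 4, G t q r rb * S t q s sb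
      = 2 * (if r = s then (1 : ℂ) else 0) * (if rb = sb then (1 : ℂ) else 0))
    (Γ : ℝ → Fin 4 → Fin 4 → ℝ)
    (hΓ_compat : ∀ t p q,
      (∑ a : Fin 4, g t p a * Γ t a q) + (∑ a : Fin 4, g t q a * Γ t a p)
        = deriv (fun x => g x p q) t)
    (A : ℝ → Fin 2 → Fin 2 → ℂ)
    (hA : ∀ t i j, A t i j
      = (1 / 4) * (∑ sb : Fin 2, ∑ p : Fin 4, ∑ q : Fin 4,
            G t p i sb * (Γ t p q : ℂ) * S t q j sb)
        - (1 / 4) * (∑ sb : Fin 2, ∑ q : Fin 4,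
            deriv (fun x => G x q i sb) t * S t q j sb)
        - (1 / 4) * (∑ ib : Fin 2, ∑ jb : Fin 2,
            deriv (fun x => star (d x jb ib)) t * star (e t ib jb))
          * (if i = j then (1 : ℂ) else 0))
    (hsym_quad : ∀ t (p q : Fin 4) (r u rb ub : Fin 2),
      G t p r ub * G t q u rb + G t q r ub * G t p u rb
        = G t p r rb * G t q u ub + G t q r rb * G t p u ub
          - 2 * e t r u * star (e t rb ub) * (g t p q : ℂ))
    (B : ℝ → Fin 2 → Fin 2 → ℂ)
    (hB : ∀ t ib kb, B t ib kb
      = (1 / 4) * (∑ s : Fin 2, ∑ q : Fin 4, ∑ m : Fin 4,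
            G t q s ib * (Γ t q m : ℂ) * S t m s kb)
        - (1 / 4) * (∑ s : Fin 2, ∑ m : Fin 4,
            deriv (fun x => G x m s ib) t * S t m s kb)
        - (1 / 4) * (∑ s : Fin 2, ∑ u : Fin 2,
            deriv (fun x => d x s u) t * e t u s)
          * (if ib = kb then (1 : ℂ) else 0))
    : ∀ (t : ℝ) (p : Fin 4) (i ib : Fin 2),
      deriv (fun x => G x p i ib) t
        + (∑ k : Fin 2, A t i k * G t p k ib)
        + (∑ kb : Fin 2, B t ib kb * G t p i kb)
        - (∑ k : Fin 4, (Γ t k p : ℂ) * G t k i ib) = 0 := by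
  intro t p i ib
  have hgh' := fun x => map_ofReal_mul_map_ofReal_eq_one (hgh x)
  have hS' := fun x => eq_sum_smul_mul_mul_conjTranspose (hS x)
  have hdual := fun x p q => (trace_transpose_mul_eq_sum (G x p) (S x q)).trans (hquad1 x p q)
  have hσ := fun x => sum_smul_eq_of_eq_sum_smul (hgh' x) (hS' x)
  have hpair := fun x => trace_transpose_mul_eq_two_mul (hdual x) (hσ x)
  have hskew_d : ∀ x, (d x)ᵀ = -d x := fun x => by ext i j; exact hd_skew x j i
  have hde' := mul_eq_one_of_sum_mul_eq (hde t)
  have hderiv := trace_transpose_deriv_mul_add_eq_of_pairing hpair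
    (fun p i j => (hG_diff p i j t).hasDerivAt) (fun p a => (hg_diff p a t).hasDerivAt.ofReal_comp)
    (hasDerivAt_transpose_apply_eq_mul (fun i j => (hd_diff i j t).hasDerivAt) hskew_d hde')
    (by ext i j; exact hd_skew t i j)
  have hg_symm' : (Matrix.map (g t) ((↑) : ℝ → ℂ))ᵀ = Matrix.map (g t) (↑) := by
    ext i j; exact congrArg Complex.ofReal (hg_symm t j i)
  have hskew := trace_transpose_mul_add_eq_of_compat (Γ := Matrix.map (Γ t) ((↑) : ℝ → ℂ))
    hg_symm' (hpair t) hderiv (fun p q => by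
      have h := congrArg Complex.ofReal (hΓ_compat t p q); push_cast at h; exact h)
    (fun q => rfl)
  have hc := mul_add_transpose_eq_neg_smul (hσ t) (fun q m => rfl) hskew
  have hD := fun q => eq_sum_trace_div_two_smul (hquad2 t) (covariantDeriv G Γ t q)
  have heSe := mul_mul_conjTranspose_eq_sum (hskew_d t) hde' (hS' t)
  have hsum := sum_mul_transpose_mul_add_eq (hsym_quad t) (hdual t) heSe hD hg_symm' (hgh' t) hc p
  have key := add_mul_add_mul_transpose_eq_zero (by simp) p hsum
    (eq_covariantDeriv_mul_transpose (hA t)) (eq_transpose_covariantDeriv_mul (hB t))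
  exact (covariantDeriv_add_mul_add_mul_transpose_apply (A := A t) (B := B t) p i ib).symm.trans
    (congrFun (congrFun key i) ib)

/-- The spinor connection coefficients `A^i_j` and the conjugate coefficients
`B^ī_{k̄}` given by the explicit formulas satisfy the Infeld–van der Waerden
concordance condition `∇G = 0` along the given frame direction:
`((G_p)_{i,ī})' + Σ_k A^i_k (G_p)_{k,ī} + Σ_{k̄} B^ī_{k̄} (G_p)_{i,k̄}
  - Σ_k Γ^k_p (G_k)_{i,ī} = 0`. -/
theorem spinor_connection_IvdW_concordance
    (g h : ℝ → Fin 4 → Fin 4 → ℝ)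
    (hg_symm : ∀ t i j, g t i j = g t j i)
    (hg_diff : ∀ i j, Differentiable ℝ (fun t => g t i j))
    (hgh : ∀ t p q, ∑ r : Fin 4, g t p r * h t r q = if p = q then (1 : ℝ) else 0)
    (d e : ℝ → Fin 2 → Fin 2 → ℂ)
    (hd_diff : ∀ i j, Differentiable ℝ (fun t => d t i j))
    (hd_skew : ∀ t i j, d t i j = - d t j i)
    (hde : ∀ t j i, ∑ r : Fin 2, d t j r * e t r i = if j = i then (1 : ℂ) else 0)
    (G : ℝ → Fin 4 → Fin 2 → Fin 2 → ℂ)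
    (hG_diff : ∀ p i j, Differentiable ℝ (fun t => G t p i j))
    (S : ℝ → Fin 4 → Fin 2 → Fin 2 → ℂ)
    (hS : ∀ t q s sb, S t q s sb
      = ∑ r : Fin 2, ∑ rb : Fin 2, ∑ p : Fin 4,
          G t p r rb * (h t p q : ℂ) * d t r s * star (d t rb sb))
    (hquad1 : ∀ t p q, ∑ r : Fin 2, ∑ rb : Fin 2, G t p r rb * S t q r rb
      = 2 * (if p = q then (1 : ℂ) else 0))
    (hquad2 : ∀ t (r rb s sb : Fin 2), ∑ q : Fin 4, G t q r rb * S t q s sb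
      = 2 * (if r = s then (1 : ℂ) else 0) * (if rb = sb then (1 : ℂ) else 0))
    (Γ : ℝ → Fin 4 → Fin 4 → ℝ)
    (hΓ_compat : ∀ t p q,
      (∑ a : Fin 4, g t p a * Γ t a q) + (∑ a : Fin 4, g t q a * Γ t a p)
        = deriv (fun x => g x p q) t)
    (A : ℝ → Fin 2 → Fin 2 → ℂ)
    (hA : ∀ t i j, A t i j
      = (1 / 4) * (∑ sb : Fin 2, ∑ p : Fin 4, ∑ q : Fin 4,
            G t p i sb * (Γ t p q : ℂ) * S t q j sb)
        - (1 / 4) * (∑ sb : Fin 2, ∑ q : Fin 4,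
            deriv (fun x => G x q i sb) t * S t q j sb)
        - (1 / 4) * (∑ ib : Fin 2, ∑ jb : Fin 2,
            deriv (fun x => star (d x jb ib)) t * star (e t ib jb))
          * (if i = j then (1 : ℂ) else 0))
    (hG_herm : ∀ t p i j, G t p i j = star (G t p j i))
    (hsym_quad : ∀ t (p q : Fin 4) (r u rb ub : Fin 2),
      G t p r ub * G t q u rb + G t q r ub * G t p u rb
        = G t p r rb * G t q u ub + G t q r rb * G t p u ub
          - 2 * e t r u * star (e t rb ub) * (g t p q : ℂ))
    (B : ℝ → Fin 2 → Fin 2 → ℂ)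
    (hB : ∀ t ib kb, B t ib kb
      = (1 / 4) * (∑ s : Fin 2, ∑ q : Fin 4, ∑ m : Fin 4,
            G t q s ib * (Γ t q m : ℂ) * S t m s kb)
        - (1 / 4) * (∑ s : Fin 2, ∑ m : Fin 4,
            deriv (fun x => G x m s ib) t * S t m s kb)
        - (1 / 4) * (∑ s : Fin 2, ∑ u : Fin 2,
            deriv (fun x => d x s u) t * e t u s)
          * (if ib = kb then (1 : ℂ) else 0))
    : ∀ (t : ℝ) (p : Fin 4) (i ib : Fin 2),
      deriv (fun x => G x p i ib) t
        + (∑ k : Fin 2, A t i k * G t p k ib)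
        + (∑ kb : Fin 2, B t ib kb * G t p i kb)
        - (∑ k : Fin 4, (Γ t k p : ℂ) * G t k i ib) = 0 :=
  spinor_connection_IvdW_concordance_general g h hg_symm hg_diff hgh d e hd_diff hd_skew hde G
    hG_diff S hS hquad1 hquad2 Γ hΓ_compat A hA hsym_quad B hB
end
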